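/- arXiv:1801.05003 — 11 statements merged into one kernel-verified Lean document; each statement's English description precedes it below -/
import Mathlib

section
/- For n ∈ ℕ and x ∈ [0,1], the pointwise limit as c → 0 of p_{n,k}^{[c]}(x) equals (n x)^k e^{-n x}/k!, i.e., lim_{c→0} C(-n/c,k)(-c x)^k (1+c x)^{-n/c-k} = (n x)^k e^{-n x}/k!. -/
/-- Generalized binomial coefficient `C(a,k) = a(a-1)⋯(a-k+1)/k!`. -/
noncomputable def genChoose (a : ℝ) (k : ℕ) : ℝ :=
  (∏ i ∈ Finset.range k, (a - i)) / (Nat.factorial k)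

/-!
For `c ≠ 0` the factor `C(-n/c, k) (-c)^k` equals `∏_{i<k} (n + i c) / k!`, a polynomial in `c`
tending to `n^k / k!`, while `(1 + c x)^(-n/c - k) = exp (-n log(1 + c x)/c - k log(1 + c x))`
tends to `e^{-n x}` because `log(1 + c x)/c` is a difference quotient of `c ↦ log(1 + c x)` at `0`.
-/

open Filter Topology Finset Real

lemma genChoose_neg_div_mul_neg_pow (a : ℝ) {c : ℝ} (hc : c ≠ 0) (k : ℕ) :
    genChoose (-a / c) k * (-c) ^ k = (∏ i ∈ range k, (a + i * c)) / k.factorial := by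
  rw [genChoose, div_mul_eq_mul_div, pow_eq_prod_const, ← prod_mul_distrib]
  congr 1
  refine prod_congr rfl fun i _ => ?_
  field_simp
  ring

lemma tendsto_log_one_add_mul_div (x : ℝ) :
    Tendsto (fun c : ℝ => log (1 + c * x) / c) (𝓝[≠] 0) (𝓝 x) := by
  have hderiv : HasDerivAt (fun c : ℝ => log (1 + c * x)) x 0 := by
    simpa using (((hasDerivAt_id (0 : ℝ)).mul_const x).const_add 1).log (by simp)
  refine (hasDerivAt_iff_tendsto_slope.mp hderiv).congr fun c => ?_
  simp [slope_def_field]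

lemma tendsto_one_add_mul_rpow_neg_div_sub (a x k : ℝ) :
    Tendsto (fun c : ℝ => (1 + c * x) ^ (-a / c - k)) (𝓝[≠] 0) (𝓝 (exp (-(a * x)))) := by
  have hcont : ContinuousAt (fun c : ℝ => 1 + c * x) 0 := by fun_prop
  have hpos : ∀ᶠ c in 𝓝[≠] 0, 0 < 1 + c * x :=
    nhdsWithin_le_nhds (hcont.eventually (eventually_gt_nhds (by simp)))
  have hlog : Tendsto (fun c : ℝ => log (1 + c * x)) (𝓝[≠] 0) (𝓝 0) := by
    simpa [Function.comp_def] using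
      ((continuousAt_log (by simp)).comp hcont).tendsto.mono_left nhdsWithin_le_nhds
  have hexp := (continuous_exp.tendsto _).comp
    (((tendsto_log_one_add_mul_div x).const_mul (-a)).sub (hlog.const_mul k))
  refine (hexp.congr' ?_).trans (by simp)
  filter_upwards [self_mem_nhdsWithin, hpos] with c (hc : c ≠ 0) hc_pos
  rw [Function.comp_apply, rpow_def_of_pos hc_pos]
  congr 1
  field_simp

theorem stmt_2_general (n x : ℝ) (k : ℕ) :
    Filter.Tendsto
      (fun c : ℝ => genChoose (-n / c) k * (-c * x) ^ k * (1 + c * x) ^ (-n / c - k))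
      (nhdsWithin 0 {0}ᶜ)
      (nhds ((n * x) ^ k * Real.exp (-(n * x)) / (Nat.factorial k))) := by
  have hprod : Tendsto (fun c : ℝ => ∏ i ∈ range k, (n + i * c)) (𝓝[≠] 0) (𝓝 (n ^ k)) := by
    have hcont : Continuous fun c : ℝ => ∏ i ∈ range k, (n + i * c) := by fun_prop
    simpa using (hcont.tendsto 0).mono_left nhdsWithin_le_nhds
  have hlim := ((hprod.div_const (k.factorial : ℝ)).mul_const (x ^ k)).mul
    (tendsto_one_add_mul_rpow_neg_div_sub n x k)
  rw [show (n * x) ^ k * exp (-(n * x)) / k.factorial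
      = n ^ k / k.factorial * x ^ k * exp (-(n * x)) by ring]
  refine hlim.congr' ?_
  filter_upwards [self_mem_nhdsWithin] with c (hc : c ≠ 0)
  rw [mul_pow, ← mul_assoc, genChoose_neg_div_mul_neg_pow n hc]

theorem stmt_2 (n x : ℝ) (hn : 0 < n) (hx : 0 ≤ x) (k : ℕ) :
    Filter.Tendsto
      (fun c : ℝ => genChoose (-n / c) k * (-c * x) ^ k * (1 + c * x) ^ (-n / c - k))
      (nhdsWithin 0 {0}ᶜ)
      (nhds ((n * x) ^ k * Real.exp (-(n * x)) / (Nat.factorial k))) :=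
  stmt_2_general n x k
end

section
/- Let S_{n,0}(x) = ∑_{k=0}^∞ ((n x)^k e^{-n x}/k!)^2. Then S_{n,0} satisfies the differential equation x S_{n,0}''(x) + (4 n x + 1) S_{n,0}'(x) + 2 n S_{n,0}(x) = 0 for x > 0. -/
/-!
Squaring the Poisson weights gives `S(x) = e^{-2nx} G(n²x²)` with
`G(t) = ∑ tᵏ/(k!)² = I₀(2√t)`. The coefficient identity `(k+1)² c_{k+1} = c_k` of `G` is the
modified Bessel equation `t G'' + G' = G`, and substituting `t = n²x²` and the exponential
factor turns it into the stated equation.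
-/

open Real Nat

noncomputable def powerSeriesSum (a : ℕ → ℝ) (x : ℝ) : ℝ := ∑' k, a k * x ^ k

def derivCoeff (a : ℕ → ℝ) (k : ℕ) : ℝ := ((k : ℝ) + 1) * a (k + 1)

def IsEntireCoeff (a : ℕ → ℝ) : Prop := ∀ x : ℝ, Summable fun k => |a k * x ^ k|

namespace IsEntireCoeff

variable {a : ℕ → ℝ}

theorem summable (ha : IsEntireCoeff a) (x : ℝ) : Summable fun k => a k * x ^ k :=
  (ha x).of_abs

theorem derivCoeff (ha : IsEntireCoeff a) : IsEntireCoeff (_root_.derivCoeff a) := by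
  intro x
  set R := |x| + 1
  refine .of_nonneg_of_le (fun k => abs_nonneg _) (fun k => ?_)
    ((summable_nat_add_iff 1).2 (ha (2 * R)))
  have hk : (k : ℝ) + 1 ≤ 2 ^ (k + 1) := by exact_mod_cast (k + 1).lt_two_pow_self.le
  have hx : |x| ^ k ≤ R ^ (k + 1) :=
    (pow_le_pow_left₀ (abs_nonneg x) (by linarith) k).trans
      (pow_le_pow_right₀ (by linarith [abs_nonneg x]) k.le_succ)
  simp only [_root_.derivCoeff, abs_mul, abs_pow, mul_pow, abs_two,
    abs_of_nonneg (by positivity : (0 : ℝ) ≤ k + 1), abs_of_nonneg (by positivity : 0 ≤ R)]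
  calc ((k : ℝ) + 1) * |a (k + 1)| * |x| ^ k ≤ 2 ^ (k + 1) * |a (k + 1)| * R ^ (k + 1) := by
        gcongr
    _ = |a (k + 1)| * (2 ^ (k + 1) * R ^ (k + 1)) := by ring

theorem hasDerivAt (ha : IsEntireCoeff a) (x : ℝ) :
    HasDerivAt (powerSeriesSum a) (powerSeriesSum (_root_.derivCoeff a) x) x := by
  set R := |x| + 1
  have hxR : x ∈ Metric.ball (0 : ℝ) R := by simp [R]
  have hu : Summable fun k => |a k| * (k * R ^ (k - 1)) := by
    refine (summable_nat_add_iff 1).1 ((ha.derivCoeff R).congr fun k => ?_)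
    simp only [_root_.derivCoeff, abs_mul, abs_pow, abs_of_nonneg (by positivity : 0 ≤ R),
      abs_of_nonneg (by positivity : (0 : ℝ) ≤ k + 1), Nat.cast_add_one, Nat.add_sub_cancel]
    ring
  have hbound : ∀ k, ∀ y ∈ Metric.ball (0 : ℝ) R,
      ‖a k * (k * y ^ (k - 1))‖ ≤ |a k| * (k * R ^ (k - 1)) := by
    intro k y hy
    have hy : |y| ≤ R := by simpa using (Metric.mem_ball.1 hy).le
    rw [Real.norm_eq_abs, abs_mul, abs_mul, abs_pow, Nat.abs_cast]
    gcongr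
  have key := hasDerivAt_tsum_of_isPreconnected hu Metric.isOpen_ball
    (convex_ball (0 : ℝ) R).isPreconnected
    (fun k y _ => (hasDerivAt_pow k y).const_mul (a k)) hbound hxR (ha.summable x) hxR
  have hval : powerSeriesSum (_root_.derivCoeff a) x = ∑' k, a k * (k * x ^ (k - 1)) := by
    refine (((hasSum_nat_add_iff' 1).1 ?_).tsum_eq).symm
    simp only [Finset.sum_range_one, Nat.cast_zero, zero_mul, mul_zero, sub_zero,
      Nat.cast_add_one, Nat.add_sub_cancel]
    exact (ha.derivCoeff.summable x).hasSum.congr_fun fun k => by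
      simp only [_root_.derivCoeff]
      ring
  rwa [hval]

theorem hasSum_mul_powerSeriesSum_derivCoeff (ha : IsEntireCoeff a) (x : ℝ) :
    HasSum (fun k => k * a k * x ^ k) (x * powerSeriesSum (_root_.derivCoeff a) x) := by
  refine (hasSum_nat_add_iff' 1).1 ?_
  simp only [Finset.sum_range_one, Nat.cast_zero, zero_mul, sub_zero, Nat.cast_add_one]
  exact ((ha.derivCoeff.summable x).hasSum.mul_left x).congr_fun fun k => by
    simp only [_root_.derivCoeff]
    ring

end IsEntireCoeff

noncomputable def invFactorialSq (k : ℕ) : ℝ := ((k ! : ℝ) ^ 2)⁻¹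

theorem isEntireCoeff_invFactorialSq : IsEntireCoeff invFactorialSq := by
  intro x
  refine .of_nonneg_of_le (fun k => abs_nonneg _) (fun k => ?_) (summable_pow_div_factorial |x|)
  have hk : (1 : ℝ) ≤ k ! := by exact_mod_cast k.factorial_pos
  rw [invFactorialSq, abs_mul, abs_inv, abs_pow, abs_pow, Nat.abs_cast, inv_mul_eq_div]
  gcongr
  nlinarith

theorem succ_mul_derivCoeff_invFactorialSq (k : ℕ) :
    ((k : ℝ) + 1) * derivCoeff invFactorialSq k = invFactorialSq k := by
  have hk : (k ! : ℝ) ≠ 0 := by positivity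
  simp only [derivCoeff, invFactorialSq, Nat.factorial_succ, Nat.cast_mul, Nat.cast_add_one]
  field_simp

theorem invFactorialSq_bessel_ode (t : ℝ) :
    t * powerSeriesSum (derivCoeff (derivCoeff invFactorialSq)) t
      + powerSeriesSum (derivCoeff invFactorialSq) t = powerSeriesSum invFactorialSq t := by
  have hc := isEntireCoeff_invFactorialSq
  have h := (hc.derivCoeff.hasSum_mul_powerSeriesSum_derivCoeff t).add
    (hc.derivCoeff.summable t).hasSum
  refine h.unique ((hc.summable t).hasSum.congr_fun fun k => ?_)
  rw [← succ_mul_derivCoeff_invFactorialSq]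
  ring

theorem tsum_sq_poisson (n y : ℝ) :
    ∑' k : ℕ, ((n * y) ^ k * exp (-(n * y)) / k !) ^ 2
      = exp (-(2 * n * y)) * powerSeriesSum invFactorialSq ((n * y) ^ 2) := by
  rw [powerSeriesSum, ← tsum_mul_left]
  refine tsum_congr fun k => ?_
  have hexp : exp (-(n * y)) ^ 2 = exp (-(2 * n * y)) := by
    rw [← exp_nat_mul]
    ring_nf
  rw [div_pow, mul_pow, hexp, invFactorialSq, ← pow_mul, ← pow_mul]
  ring

theorem hasDerivAt_comp_mul_sq {F F' : ℝ → ℝ} (hF : ∀ t, HasDerivAt F (F' t) t) (n y : ℝ) :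
    HasDerivAt (fun y => F ((n * y) ^ 2)) (F' ((n * y) ^ 2) * (2 * n ^ 2 * y)) y :=
  (hF _).comp y ((((hasDerivAt_id y).const_mul n).pow 2).congr_deriv (by simp; ring))

theorem hasDerivAt_exp_neg_two_mul (n y : ℝ) :
    HasDerivAt (fun y => exp (-(2 * n * y))) (-(2 * n) * exp (-(2 * n * y))) y :=
  (((hasDerivAt_id y).const_mul (2 * n)).neg.exp).congr_deriv (by simp; ring)

theorem exp_mul_bessel_ode (n x : ℝ) :
    letI f : ℝ → ℝ := fun y => exp (-(2 * n * y)) * powerSeriesSum invFactorialSq ((n * y) ^ 2)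
    x * deriv (deriv f) x + (4 * n * x + 1) * deriv f x + 2 * n * f x = 0 := by
  have hc := isEntireCoeff_invFactorialSq
  set G := powerSeriesSum invFactorialSq
  set G₁ := powerSeriesSum (derivCoeff invFactorialSq)
  set G₂ := powerSeriesSum (derivCoeff (derivCoeff invFactorialSq))
  have hf' : deriv (fun y => exp (-(2 * n * y)) * G ((n * y) ^ 2)) = fun y =>
      exp (-(2 * n * y)) * (2 * n ^ 2 * y * G₁ ((n * y) ^ 2) - 2 * n * G ((n * y) ^ 2)) :=
    funext fun y => (((hasDerivAt_exp_neg_two_mul n y).mul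
      (hasDerivAt_comp_mul_sq hc.hasDerivAt n y)).congr_deriv (by ring)).deriv
  have hf'' : HasDerivAt (fun y =>
      exp (-(2 * n * y)) * (2 * n ^ 2 * y * G₁ ((n * y) ^ 2) - 2 * n * G ((n * y) ^ 2)))
      (exp (-(2 * n * x)) * (4 * n ^ 4 * x ^ 2 * G₂ ((n * x) ^ 2)
        + (2 * n ^ 2 - 8 * n ^ 3 * x) * G₁ ((n * x) ^ 2) + 4 * n ^ 2 * G ((n * x) ^ 2))) x :=
    ((hasDerivAt_exp_neg_two_mul n x).mul
      ((((hasDerivAt_id x).const_mul (2 * n ^ 2)).mul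
          (hasDerivAt_comp_mul_sq hc.derivCoeff.hasDerivAt n x)).sub
        ((hasDerivAt_comp_mul_sq hc.hasDerivAt n x).const_mul (2 * n)))).congr_deriv
      (by simp; ring)
  simp only [hf', hf''.deriv]
  linear_combination
    4 * n ^ 2 * x * exp (-(2 * n * x)) * invFactorialSq_bessel_ode ((n * x) ^ 2)

theorem stmt_4_general (n : ℝ) :
    ∀ x : ℝ, 0 < x →
      letI S : ℝ → ℝ := fun y => ∑' k : ℕ, ((n * y) ^ k * Real.exp (-(n * y)) / (Nat.factorial k)) ^ 2
      x * deriv (deriv S) x + (4 * n * x + 1) * deriv S x + 2 * n * S x = 0 := by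
  intro x _
  simp only [tsum_sq_poisson]
  exact exp_mul_bessel_ode n x

theorem stmt_4 (n : ℝ) (hn : 0 < n) :
    ∀ x : ℝ, 0 < x →
      letI S : ℝ → ℝ := fun y => ∑' k : ℕ, ((n * y) ^ k * Real.exp (-(n * y)) / (Nat.factorial k)) ^ 2
      x * deriv (deriv S) x + (4 * n * x + 1) * deriv S x + 2 * n * S x = 0 :=
  stmt_4_general n
end

section
/- If S : [0,∞) → (0,∞) is twice differentiable, satisfies S(0) = 1, is logarithmically convex (so S''(x) S(x) ≥ S'(x)^2), and satisfies x S''(x) + (4 n x + 1) S'(x) + 2 n S(x) = 0 for x > 0 with n > 0, then for all t ≥ 0: S(t)^2 ≤ 2 exp(√(1+16 n² t²) − 1 − 4 n t) / (1 + √(1+16 n² t²)). -/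
private lemma quad_step (a b s x n : ℝ) (hx : 0 < x) (hb : 0 < b) (hs : 1 ≤ s)
    (hs2 : s^2 = 1 + 16*n^2*x^2)
    (hq : x*a^2 + (4*n*x+1)*a*b + 2*n*b^2 ≤ 0) :
    2*x*a ≤ (s - 4*n*x - 1)*b := by
  rcases le_or_gt (2*x*a + (s + 4*n*x + 1)*b) 0 with h | h
  · nlinarith [mul_pos (show (0:ℝ) < s by linarith) hb]
  · nlinarith [hq, hs2, h]

private lemma my_deriv_eq (n x s : ℝ) (hx : 0 < x) (hs : 1 ≤ s) (hs2 : s^2 = 1 + 16*n^2*x^2) :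
    ((16*n^2*(2*x) / (2*s) - 4*n) - (16*n^2*(2*x) / (2*s) / 2) / ((1 + s)/2))/2
      = (s - 4*n*x - 1)/(2*x) := by
  have hs0 : s ≠ 0 := by linarith
  have h1s : 1 + s ≠ 0 := by linarith
  field_simp
  ring_nf
  nlinarith [hs2, sq_nonneg s]

private lemma F_hasDerivAt (n x : ℝ) :
    HasDerivAt (fun y : ℝ => ((Real.sqrt (1 + 16*n^2*y^2) - 1) - 4*n*y -
        Real.log ((1 + Real.sqrt (1 + 16*n^2*y^2))/2))/2)
      (((16*n^2*(2*x) / (2*Real.sqrt (1 + 16*n^2*x^2)) - 4*n) -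
        (16*n^2*(2*x) / (2*Real.sqrt (1 + 16*n^2*x^2)) / 2) /
          ((1 + Real.sqrt (1 + 16*n^2*x^2))/2))/2) x := by
  have hQpos : (0:ℝ) < 1 + 16*n^2*x^2 := by positivity
  have h1 : HasDerivAt (fun y : ℝ => 1 + 16*n^2*y^2) (16*n^2*(2*x)) x := by
    have := ((hasDerivAt_pow 2 x).const_mul (16*n^2)).const_add 1
    simpa using this
  have h2 := h1.sqrt hQpos.ne'
  have h5 : HasDerivAt (fun y : ℝ => 4*n*y) (4*n) x := by
    simpa using (hasDerivAt_id x).const_mul (4*n)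
  have h3 := (h2.const_add 1).div_const 2
  have h4 := h3.log (by positivity : (1 + Real.sqrt (1 + 16*n^2*x^2))/2 ≠ 0)
  exact (((h2.sub_const 1).sub h5).sub h4).div_const 2

theorem stmt_5 (n : ℝ) (hn : 0 < n) (S : ℝ → ℝ)
    (hpos : ∀ x, 0 ≤ x → 0 < S x)
    (hS0 : S 0 = 1)
    (hdiff : ∀ x, 0 ≤ x → DifferentiableAt ℝ S x ∧ DifferentiableAt ℝ (deriv S) x)
    (hlogconv : ∀ x, 0 ≤ x → deriv (deriv S) x * S x ≥ (deriv S x) ^ 2)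
    (hode : ∀ x, 0 < x →
      x * deriv (deriv S) x + (4 * n * x + 1) * deriv S x + 2 * n * S x = 0) :
    ∀ t, 0 ≤ t →
      S t ^ 2 ≤ 2 * Real.exp (Real.sqrt (1 + 16 * n ^ 2 * t ^ 2) - 1 - 4 * n * t) /
        (1 + Real.sqrt (1 + 16 * n ^ 2 * t ^ 2)) := by
  intro t ht
  set F : ℝ → ℝ := fun y : ℝ => ((Real.sqrt (1 + 16*n^2*y^2) - 1) - 4*n*y -
      Real.log ((1 + Real.sqrt (1 + 16*n^2*y^2))/2))/2 with hFdef
  have hQpos : ∀ x : ℝ, (0:ℝ) < 1 + 16*n^2*x^2 := fun x => by positivity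
  have hs1 : ∀ x : ℝ, 1 ≤ Real.sqrt (1 + 16*n^2*x^2) := by
    intro x
    have h := Real.sqrt_le_sqrt (show (1:ℝ) ≤ 1+16*n^2*x^2 by nlinarith [sq_nonneg (n*x)])
    simpa using h
  have hs2 : ∀ x : ℝ, (Real.sqrt (1 + 16*n^2*x^2))^2 = 1 + 16*n^2*x^2 :=
    fun x => Real.sq_sqrt (hQpos x).le
  set g : ℝ → ℝ := fun y => Real.log (S y) - F y with hgdef
  have hg : AntitoneOn g (Set.Ici (0:ℝ)) := by
    apply antitoneOn_of_deriv_nonpos (convex_Ici 0)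
    · intro x hx
      apply ContinuousAt.continuousWithinAt
      exact ((Real.continuousAt_log (hpos x hx).ne').comp
        (hdiff x hx).1.continuousAt).sub (F_hasDerivAt n x).continuousAt
    · intro x hx
      rw [interior_Ici] at hx
      exact (((((hdiff x (le_of_lt hx)).1.hasDerivAt).log
        (hpos x (le_of_lt hx)).ne').sub (F_hasDerivAt n x)).differentiableAt).differentiableWithinAt
    · intro x hx
      rw [interior_Ici] at hx
      have hxpos : (0:ℝ) < x := hx
      have hSx := hpos x hxpos.le
      have hSd : HasDerivAt S (deriv S x) x := (hdiff x hxpos.le).1.hasDerivAt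
      have hgd : HasDerivAt g (deriv S x / S x -
          (((16*n^2*(2*x) / (2*Real.sqrt (1 + 16*n^2*x^2)) - 4*n) -
            (16*n^2*(2*x) / (2*Real.sqrt (1 + 16*n^2*x^2)) / 2) /
              ((1 + Real.sqrt (1 + 16*n^2*x^2))/2))/2)) x :=
        (hSd.log hSx.ne').sub (F_hasDerivAt n x)
      rw [hgd.deriv, my_deriv_eq n x _ hxpos (hs1 x) (hs2 x), sub_nonpos]
      -- quadratic inequality from log-convexity + ODE
      have hodex := hode x hxpos
      have hconv := hlogconv x hxpos.le
      have hq : x*(deriv S x)^2 + (4*n*x+1)*(deriv S x)*(S x) + 2*n*(S x)^2 ≤ 0 := by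
        have h1 : x * (deriv S x)^2 ≤ x * (deriv (deriv S) x * S x) :=
          mul_le_mul_of_nonneg_left hconv hxpos.le
        have h2 : (x * deriv (deriv S) x + (4*n*x+1) * deriv S x + 2*n*S x) * S x = 0 := by
          rw [hodex]; ring
        nlinarith [h1, h2]
      have key := quad_step (deriv S x) (S x) (Real.sqrt (1 + 16*n^2*x^2)) x n
        hxpos hSx (hs1 x) (hs2 x) hq
      rw [div_le_div_iff₀ hSx (by positivity : (0:ℝ) < 2*x)]
      linarith [key]
  have hgt : g t ≤ g 0 := hg (Set.self_mem_Ici) (Set.mem_Ici.mpr ht) ht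
  have hF0 : F 0 = 0 := by
    simp [hFdef, Real.sqrt_one]
  have hg0 : g 0 = 0 := by
    simp [hgdef, hS0, hF0]
  have hlog : Real.log (S t) ≤ F t := by
    have := hgt; rw [hg0] at this; simpa [hgdef] using this
  -- exponentiate
  have hSt := hpos t ht
  have hexp : S t ≤ Real.exp (F t) := by
    calc S t = Real.exp (Real.log (S t)) := (Real.exp_log hSt).symm
    _ ≤ Real.exp (F t) := Real.exp_le_exp.2 hlog
  have hstep : S t ^ 2 ≤ Real.exp (F t) ^ 2 := by
    have := pow_le_pow_left₀ hSt.le hexp 2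
    simpa using this
  refine hstep.trans (le_of_eq ?_)
  have hspos : (0:ℝ) < 1 + Real.sqrt (1 + 16*n^2*t^2) := by linarith [hs1 t]
  have h2F : Real.exp (F t) ^ 2 = Real.exp (2 * F t) := by
    rw [← Real.exp_nat_mul]; norm_num
  rw [h2F]
  have : 2 * F t = (Real.sqrt (1 + 16*n^2*t^2) - 1 - 4*n*t) -
      Real.log ((1 + Real.sqrt (1 + 16*n^2*t^2))/2) := by
    simp only [hFdef]; ring
  rw [this, Real.exp_sub, Real.exp_log (by positivity)]
  rw [div_div_eq_mul_div]
  ring_nf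
end

section
/- The modified Bessel function of the first kind of order 0, I_0(t) = ∑_{k=0}^∞ (t/2)^{2k}/(k!)^2, satisfies I_0(t)^2 ≤ 2 exp(√(1+4 t²) − 1) / (√(1+4 t²) + 1) for all t ≥ 0. -/
/-!
Put `x = t² / 4` and `u = √(1 + 4t²) - 1`, so that `16x = u(u + 2)`; the claim becomes
`(u + 2) I₀² ≤ 2eᵘ`. By Vandermonde, `I₀² = ∑ₙ C(2n, n) xⁿ / n!²`, and expanding `(u + 2)ⁿ⁺¹`
turns the left side into a double series `∑ₙ ∑ⱼ aₙⱼ uⁿ⁺ʲ` with nonnegative coefficients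
`aₙⱼ = termCoeff n j`. For `n + j > 0` the bound `C(2n, n)² (3n + 1) ≤ 16ⁿ` gives
`aₙⱼ ≤ 2^(-⌊(n + 1 - j)/2⌋) / (n + j)!`, and these exponents are distinct along each
antidiagonal `n + j = m`, so the coefficient of `uᵐ` is at most `2 / m!`, the coefficient
of `2eᵘ` (for `m = 0` it equals `a₀₀ = 2`).
-/

open Finset Nat Real
open scoped ENNReal

theorem centralBinom_sq_mul_le (n : ℕ) : centralBinom n ^ 2 * (3 * n + 1) ≤ 16 ^ n := by
  induction n with
  | zero => simp
  | succ n ih =>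
    have hpoly : (2 * n + 1) ^ 2 * (3 * n + 4) ≤ 4 * (n + 1) ^ 2 * (3 * n + 1) := by nlinarith
    refine Nat.le_of_mul_le_mul_left ?_ (by positivity : 0 < (n + 1) ^ 2)
    calc (n + 1) ^ 2 * (centralBinom (n + 1) ^ 2 * (3 * (n + 1) + 1))
        = 4 * ((2 * n + 1) ^ 2 * (3 * n + 4)) * centralBinom n ^ 2 := by
          rw [← mul_assoc, ← mul_pow, succ_mul_centralBinom_succ]; ring
      _ ≤ 4 * (4 * (n + 1) ^ 2 * (3 * n + 1)) * centralBinom n ^ 2 := by gcongr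
      _ = 16 * (n + 1) ^ 2 * (centralBinom n ^ 2 * (3 * n + 1)) := by ring
      _ ≤ 16 * (n + 1) ^ 2 * 16 ^ n := by gcongr
      _ = (n + 1) ^ 2 * 16 ^ (n + 1) := by ring

theorem choose_mul_two_pow_le_centralBinom (j d : ℕ) :
    (2 * j + d).choose j * 2 ^ d ≤ centralBinom (j + d) := by
  induction d generalizing j with
  | zero => simp [centralBinom_eq_two_mul_choose]
  | succ d ih =>
    have hpascal : 2 * (2 * j + d + 1).choose j ≤ (2 * j + d + 2).choose (j + 1) := by
      refine Nat.le_of_mul_le_mul_right ?_ (succ_pos j)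
      calc 2 * (2 * j + d + 1).choose j * (j + 1)
          ≤ (2 * j + d + 1 + 1) * (2 * j + d + 1).choose j := by nlinarith
        _ = (2 * j + d + 2).choose (j + 1) * (j + 1) := add_one_mul_choose_eq _ _
    calc (2 * j + (d + 1)).choose j * 2 ^ (d + 1)
        = 2 * (2 * j + d + 1).choose j * 2 ^ d := by ring_nf
      _ ≤ (2 * (j + 1) + d).choose (j + 1) * 2 ^ d := by
          rw [show 2 * (j + 1) + d = 2 * j + d + 2 by ring]; gcongr
      _ ≤ centralBinom (j + (d + 1)) := by rw [← add_assoc, add_right_comm]; exact ih (j + 1)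

theorem two_pow_half_le_factorial (k : ℕ) : 2 ^ (k / 2) ≤ k ! :=
  calc 2 ^ (k / 2) ≤ 2 ^ (k / 2) * (k / 2)! := Nat.le_mul_of_pos_right _ (factorial_pos _)
    _ ≤ (2 * (k / 2))! := two_pow_mul_factorial_le_factorial_two_mul _
    _ ≤ k ! := factorial_le (Nat.mul_div_le k 2)

theorem centralBinom_mul_add_choose_le {n j : ℕ} (hj : j ≤ n + 1) (hnj : 0 < n + j) :
    centralBinom n * (n + j).choose j * (n + 1) * 2 ^ (n + 1 - j) * 2 ^ ((n + 1 - j) / 2) ≤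
      16 ^ n * (n + 1 - j)! := by
  have hc := centralBinom_sq_mul_le n
  rcases hj.lt_or_eq with hjn | rfl
  · obtain ⟨d, rfl⟩ : ∃ d, n = j + d := ⟨n - j, by omega⟩
    have hd : j + d + 1 - j = d + 1 := by omega
    have hchoose : (j + d + j).choose j * 2 ^ d ≤ centralBinom (j + d) := by
      rw [show j + d + j = 2 * j + d by ring]; exact choose_mul_two_pow_le_centralBinom j d
    have hfac := two_pow_half_le_factorial (d + 1)
    have hsq : centralBinom (j + d) ^ 2 * (2 * (j + d + 1)) ≤ 16 ^ (j + d) :=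
      le_trans (by gcongr; omega) hc
    rw [hd]
    calc centralBinom (j + d) * (j + d + j).choose j * (j + d + 1) * 2 ^ (d + 1) *
          2 ^ ((d + 1) / 2)
        = centralBinom (j + d) * ((j + d + j).choose j * 2 ^ d) * (2 * (j + d + 1)) *
            2 ^ ((d + 1) / 2) := by ring
      _ ≤ centralBinom (j + d) * centralBinom (j + d) * (2 * (j + d + 1)) * (d + 1)! := by gcongr
      _ = centralBinom (j + d) ^ 2 * (2 * (j + d + 1)) * (d + 1)! := by ring
      _ ≤ 16 ^ (j + d) * (d + 1)! := by gcongr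
  · have hodd : (n + (n + 1)).choose (n + 1) * (n + 1) = (2 * n + 1) * centralBinom n := by
      rw [centralBinom_eq_two_mul_choose, add_one_mul_choose_eq]; ring_nf
    simp only [Nat.sub_self, Nat.zero_div, pow_zero, mul_one, factorial_zero]
    calc centralBinom n * (n + (n + 1)).choose (n + 1) * (n + 1)
        = centralBinom n ^ 2 * (2 * n + 1) := by rw [mul_assoc, hodd]; ring
      _ ≤ centralBinom n ^ 2 * (3 * n + 1) := by gcongr; omega
      _ ≤ 16 ^ n := hc

theorem choose_mul_factorial_mul_factorial_eq {n j : ℕ} (hj : j ≤ n + 1) :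
    (n + 1).choose j * (n + j)! * (n + 1 - j)! = (n + j).choose j * (n + 1) * n ! ^ 2 := by
  have h1 := choose_mul_factorial_mul_factorial hj
  have h2 := add_choose_mul_factorial_mul_factorial n j
  refine Nat.eq_of_mul_eq_mul_right (factorial_pos j) ?_
  calc (n + 1).choose j * (n + j)! * (n + 1 - j)! * j !
      = ((n + 1).choose j * j ! * (n + 1 - j)!) * (n + j)! := by ring
    _ = (n + 1) * n ! * ((n + j).choose j * n ! * j !) := by rw [h1, h2, factorial_succ]
    _ = (n + j).choose j * (n + 1) * n ! ^ 2 * j ! := by ring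

theorem centralBinom_mul_choose_mul_factorial_le {n j : ℕ} (hj : j ≤ n + 1) (hnj : 0 < n + j) :
    centralBinom n * (n + 1).choose j * 2 ^ (n + 1 - j) * 2 ^ ((n + 1 - j) / 2) * (n + j)! ≤
      16 ^ n * n ! ^ 2 := by
  refine Nat.le_of_mul_le_mul_right ?_ (factorial_pos (n + 1 - j))
  calc centralBinom n * (n + 1).choose j * 2 ^ (n + 1 - j) * 2 ^ ((n + 1 - j) / 2) * (n + j)! *
        (n + 1 - j)!
      = centralBinom n * 2 ^ (n + 1 - j) * 2 ^ ((n + 1 - j) / 2) *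
          ((n + 1).choose j * (n + j)! * (n + 1 - j)!) := by ring
    _ = centralBinom n * (n + j).choose j * (n + 1) * 2 ^ (n + 1 - j) * 2 ^ ((n + 1 - j) / 2) *
          n ! ^ 2 := by rw [choose_mul_factorial_mul_factorial_eq hj]; ring
    _ ≤ 16 ^ n * (n + 1 - j)! * n ! ^ 2 :=
        Nat.mul_le_mul_right _ (centralBinom_mul_add_choose_le hj hnj)
    _ = 16 ^ n * n ! ^ 2 * (n + 1 - j)! := by ring

noncomputable def termCoeff (n j : ℕ) : ℝ :=
  centralBinom n * (n + 1).choose j * 2 ^ (n + 1 - j) / (16 ^ n * n ! ^ 2)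

theorem termCoeff_nonneg (n j : ℕ) : 0 ≤ termCoeff n j := by
  unfold termCoeff; positivity

theorem termCoeff_eq_zero {n j : ℕ} (h : n + 1 < j) : termCoeff n j = 0 := by
  simp [termCoeff, choose_eq_zero_of_lt h]

theorem termCoeff_le {n j : ℕ} (hj : j ≤ n + 1) (hnj : 0 < n + j) :
    termCoeff n j ≤ (1 / 2) ^ ((n + 1 - j) / 2) / (n + j)! := by
  have key : (centralBinom n * (n + 1).choose j * 2 ^ (n + 1 - j) * 2 ^ ((n + 1 - j) / 2) *
      (n + j)! : ℝ) ≤ 16 ^ n * n ! ^ 2 := by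
    exact_mod_cast centralBinom_mul_choose_mul_factorial_le hj hnj
  rw [termCoeff, one_div_pow, div_div, div_le_div_iff₀ (by positivity) (by positivity)]
  linarith

theorem sum_half_pow_le_two (s : Finset ℕ) : ∑ i ∈ s, (1 / 2 : ℝ) ^ i ≤ 2 :=
  (summable_geometric_two.sum_le_tsum s fun _ _ => by positivity).trans tsum_geometric_two.le

theorem sum_antidiagonal_termCoeff_le (m : ℕ) :
    ∑ p ∈ antidiagonal m, termCoeff p.1 p.2 ≤ 2 / m ! := by
  rcases m.eq_zero_or_pos with rfl | hm
  · norm_num [termCoeff]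
  set s := (antidiagonal m).filter fun p : ℕ × ℕ => p.2 ≤ p.1 + 1
  have hs : ∀ p ∈ s, p.1 + p.2 = m ∧ p.2 ≤ p.1 + 1 := fun p hp => by
    simpa [s, mem_filter, HasAntidiagonal.mem_antidiagonal] using hp
  -- on `s`, `m` and `⌊(p.1 + 1 - p.2) / 2⌋` determine `p`, since `p.1 + 1 - p.2 ≡ m + 1 (mod 2)`
  have hinj : Set.InjOn (fun p : ℕ × ℕ => (p.1 + 1 - p.2) / 2) s := by
    intro p hp q hq hpq
    have := hs p hp; have := hs q hq
    simp only at hpq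
    ext <;> omega
  calc ∑ p ∈ antidiagonal m, termCoeff p.1 p.2
      = ∑ p ∈ s, termCoeff p.1 p.2 :=
        (sum_filter_of_ne fun p _ hp => not_lt.mp fun h => hp (termCoeff_eq_zero h)).symm
    _ ≤ ∑ p ∈ s, (1 / 2 : ℝ) ^ ((p.1 + 1 - p.2) / 2) / m ! := sum_le_sum fun p hp => by
        obtain ⟨hpm, hp⟩ := hs p hp
        rw [← hpm]; exact termCoeff_le hp (by omega)
    _ = (∑ i ∈ s.image fun p : ℕ × ℕ => (p.1 + 1 - p.2) / 2, (1 / 2 : ℝ) ^ i) / m ! := by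
        rw [sum_image hinj, sum_div]
    _ ≤ 2 / m ! := by gcongr; exact sum_half_pow_le_two _

theorem sum_antidiagonal_inv_factorial_sq (n : ℕ) :
    ∑ p ∈ antidiagonal n, 1 / ((p.1)! * (p.2)! : ℝ) ^ 2 = centralBinom n / (n ! : ℝ) ^ 2 := by
  rw [eq_div_iff (by positivity), sum_mul, centralBinom_eq_two_mul_choose, two_mul,
    add_choose_eq, cast_sum]
  refine sum_congr rfl fun ⟨i, j⟩ hp => ?_
  rw [HasAntidiagonal.mem_antidiagonal] at hp
  subst hp
  rw [cast_mul, ← choose_symm_add, cast_add_choose ℝ]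
  field_simp

theorem summable_pow_div_factorial_sq {x : ℝ} (hx : 0 ≤ x) :
    Summable fun k : ℕ => x ^ k / (k ! : ℝ) ^ 2 := by
  refine (summable_pow_div_factorial x).of_nonneg_of_le (fun k => by positivity) fun k => ?_
  have : (1 : ℝ) ≤ k ! := by exact_mod_cast factorial_pos k
  exact div_le_div_of_nonneg_left (by positivity) (by positivity) (by nlinarith)

theorem ENNReal.tsum_eq_tsum_sum_antidiagonal (f : ℕ × ℕ → ℝ≥0∞) :
    ∑' p, f p = ∑' n, ∑ p ∈ antidiagonal n, f p := by
  rw [← HasAntidiagonal.sigmaAntidiagonalEquivProd.tsum_eq, ENNReal.tsum_sigma']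
  exact tsum_congr fun n => tsum_subtype (antidiagonal n) f

theorem sq_tsum_ofReal_pow_div_factorial_sq {x : ℝ} (hx : 0 ≤ x) :
    (∑' k : ℕ, ENNReal.ofReal (x ^ k / (k ! : ℝ) ^ 2)) ^ 2 =
      ∑' n : ℕ, ENNReal.ofReal (centralBinom n / n ! ^ 2 * x ^ n) := by
  rw [sq, ← ENNReal.tsum_mul_right]
  simp_rw [← ENNReal.tsum_mul_left]
  rw [← ENNReal.tsum_prod, ENNReal.tsum_eq_tsum_sum_antidiagonal]
  refine tsum_congr fun n => ?_
  rw [← sum_antidiagonal_inv_factorial_sq, sum_mul,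
    ENNReal.ofReal_sum_of_nonneg fun _ _ => by positivity]
  refine sum_congr rfl fun p hp => ?_
  rw [← ENNReal.ofReal_mul (by positivity), ← HasAntidiagonal.mem_antidiagonal.mp hp, pow_add]
  congr 1
  field_simp

theorem add_two_mul_pow_eq_sum_termCoeff (u : ℝ) (n : ℕ) :
    (u + 2) * (centralBinom n / n ! ^ 2 * (u * (u + 2) / 16) ^ n) =
      ∑ j ∈ range (n + 2), termCoeff n j * u ^ (n + j) := by
  calc (u + 2) * (centralBinom n / n ! ^ 2 * (u * (u + 2) / 16) ^ n)
      = centralBinom n / (16 ^ n * n ! ^ 2) * u ^ n * (u + 2) ^ (n + 1) := by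
        rw [div_pow, mul_pow]; ring
    _ = ∑ j ∈ range (n + 2), termCoeff n j * u ^ (n + j) := by
        rw [add_pow, mul_sum]
        refine sum_congr rfl fun j _ => ?_
        rw [termCoeff, pow_add]
        ring

theorem sum_antidiagonal_termCoeff_mul_pow_le {u : ℝ} (hu : 0 ≤ u) (m : ℕ) :
    ∑ p ∈ antidiagonal m, termCoeff p.1 p.2 * u ^ (p.1 + p.2) ≤ 2 * (u ^ m / m !) :=
  calc ∑ p ∈ antidiagonal m, termCoeff p.1 p.2 * u ^ (p.1 + p.2)
      = (∑ p ∈ antidiagonal m, termCoeff p.1 p.2) * u ^ m := by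
        rw [sum_mul]
        exact sum_congr rfl fun p hp => by rw [HasAntidiagonal.mem_antidiagonal.mp hp]
    _ ≤ 2 / m ! * u ^ m := by gcongr; exact sum_antidiagonal_termCoeff_le m
    _ = 2 * (u ^ m / m !) := by ring

theorem add_two_mul_sq_tsum_le (u : ℝ) (hu : 0 ≤ u) :
    (u + 2) * (∑' k : ℕ, (u * (u + 2) / 16) ^ k / (k ! : ℝ) ^ 2) ^ 2 ≤ 2 * exp u := by
  set x := u * (u + 2) / 16
  have hx : 0 ≤ x := by positivity
  have hexp : HasSum (fun m : ℕ => 2 * (u ^ m / m !)) (2 * exp u) :=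
    (exp_eq_exp_ℝ ▸ NormedSpace.expSeries_div_hasSum_exp u).mul_left 2
  -- in `ℝ≥0∞` the double series can be rearranged without any summability argument
  rw [← ENNReal.ofReal_le_ofReal_iff (by positivity)]
  calc ENNReal.ofReal ((u + 2) * (∑' k : ℕ, x ^ k / (k ! : ℝ) ^ 2) ^ 2)
      = ENNReal.ofReal (u + 2) * (∑' k : ℕ, ENNReal.ofReal (x ^ k / (k ! : ℝ) ^ 2)) ^ 2 := by
        rw [ENNReal.ofReal_mul (by positivity),
          ENNReal.ofReal_pow (tsum_nonneg fun k => by positivity), ENNReal.ofReal_tsum_of_nonneg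
            (fun k => by positivity) (summable_pow_div_factorial_sq hx)]
    _ = ∑' n : ℕ, ENNReal.ofReal ((u + 2) * (centralBinom n / n ! ^ 2 * x ^ n)) := by
        rw [sq_tsum_ofReal_pow_div_factorial_sq hx, ← ENNReal.tsum_mul_left]
        exact tsum_congr fun n => (ENNReal.ofReal_mul (by positivity)).symm
    _ = ∑' n : ℕ, ∑' j : ℕ, ENNReal.ofReal (termCoeff n j * u ^ (n + j)) := by
        refine tsum_congr fun n => ?_
        rw [add_two_mul_pow_eq_sum_termCoeff, ENNReal.ofReal_sum_of_nonneg fun j _ =>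
          mul_nonneg (termCoeff_nonneg n j) (by positivity)]
        refine (tsum_eq_sum fun j hj => ?_).symm
        rw [termCoeff_eq_zero (by simp only [mem_range] at hj; omega), zero_mul,
          ENNReal.ofReal_zero]
    _ = ∑' m : ℕ, ∑ p ∈ antidiagonal m, ENNReal.ofReal (termCoeff p.1 p.2 * u ^ (p.1 + p.2)) := by
        rw [← ENNReal.tsum_prod'
            (f := fun p : ℕ × ℕ => ENNReal.ofReal (termCoeff p.1 p.2 * u ^ (p.1 + p.2))),
          ENNReal.tsum_eq_tsum_sum_antidiagonal]
    _ ≤ ∑' m : ℕ, ENNReal.ofReal (2 * (u ^ m / m !)) := ENNReal.tsum_le_tsum fun m => by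
        rw [← ENNReal.ofReal_sum_of_nonneg fun p _ =>
          mul_nonneg (termCoeff_nonneg _ _) (by positivity)]
        exact ENNReal.ofReal_le_ofReal (sum_antidiagonal_termCoeff_mul_pow_le hu m)
    _ = ENNReal.ofReal (2 * exp u) := by
        rw [← ENNReal.ofReal_tsum_of_nonneg (fun m => by positivity) hexp.summable, hexp.tsum_eq]

theorem stmt_6_general (t : ℝ) :
    (∑' k : ℕ, (t / 2) ^ (2 * k) / ((Nat.factorial k : ℝ)) ^ 2) ^ 2 ≤
      2 * Real.exp (Real.sqrt (1 + 4 * t ^ 2) - 1) / (Real.sqrt (1 + 4 * t ^ 2) + 1) := by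
  set s := √(1 + 4 * t ^ 2)
  have hs : 1 ≤ s := one_le_sqrt.mpr (by nlinarith)
  have hsq : s ^ 2 = 1 + 4 * t ^ 2 := sq_sqrt (by positivity)
  have hx : ∀ k : ℕ, (t / 2) ^ (2 * k) = ((s - 1) * (s - 1 + 2) / 16) ^ k := fun k => by
    rw [pow_mul]; congr 1; linear_combination -hsq / 16
  simp_rw [hx]
  rw [le_div_iff₀ (by linarith)]
  linarith [add_two_mul_sq_tsum_le (s - 1) (by linarith)]

theorem stmt_6 (t : ℝ) (ht : 0 ≤ t) :
    (∑' k : ℕ, (t / 2) ^ (2 * k) / ((Nat.factorial k : ℝ)) ^ 2) ^ 2 ≤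
      2 * Real.exp (Real.sqrt (1 + 4 * t ^ 2) - 1) / (Real.sqrt (1 + 4 * t ^ 2) + 1) :=
  stmt_6_general t
end

section
/- Let n > 0, c > 0, and suppose S : [0,∞) → (0,∞) is twice differentiable with S(0)=1, logarithmically convex, and satisfies x(1+cx)(1+2cx)S''(x) + (4(n+c)x(1+cx)+1)S'(x) + 2n(1+2cx)S(x) = 0 for x > 0. Then with X = x(1+cx), for all x > 0: S'(x)/S(x) ≤ (√(1 + 8cX + 16(n²+c²)X²) − 1 − 4(n+c)X) / (2 X (1+2cx)). -/
private lemma quad_root_aux (a b c' P Q s : ℝ) (ha : 0 < a) (hQ : 0 < Q)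
    (hs : 0 ≤ s) (hssq : s ^ 2 = b ^ 2 - 4 * a * c')
    (hquad : a * P ^ 2 + b * (P * Q) + c' * Q ^ 2 ≤ 0) :
    P * (2 * a) ≤ (s - b) * Q := by
  have h1 : (2 * a * P + b * Q) ^ 2 ≤ (s * Q) ^ 2 := by nlinarith
  nlinarith [h1, mul_nonneg hs hQ.le]

theorem stmt_8 (n c : ℝ) (hn : 0 < n) (hc : 0 < c) (S : ℝ → ℝ)
    (hpos : ∀ x, 0 ≤ x → 0 < S x)
    (hS0 : S 0 = 1)
    (hdiff : ∀ x, 0 ≤ x → DifferentiableAt ℝ S x ∧ DifferentiableAt ℝ (deriv S) x)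
    (hlogconv : ∀ x, 0 ≤ x → deriv (deriv S) x * S x ≥ (deriv S x) ^ 2)
    (hode : ∀ x, 0 < x →
      x * (1 + c * x) * (1 + 2 * c * x) * deriv (deriv S) x +
        (4 * (n + c) * x * (1 + c * x) + 1) * deriv S x +
        2 * n * (1 + 2 * c * x) * S x = 0) :
    ∀ x, 0 < x →
      deriv S x / S x ≤
        (Real.sqrt (1 + 8 * c * (x * (1 + c * x)) +
            16 * (n ^ 2 + c ^ 2) * (x * (1 + c * x)) ^ 2) -
          1 - 4 * (n + c) * (x * (1 + c * x))) /
        (2 * (x * (1 + c * x)) * (1 + 2 * c * x)) := by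
  intro x hx
  have hx0 : (0:ℝ) ≤ x := hx.le
  have h1cx : 0 < 1 + c * x := by nlinarith
  have h2cx : 0 < 1 + 2 * c * x := by nlinarith
  have hQ : 0 < S x := hpos x hx0
  have hlc := hlogconv x hx0
  have ho := hode x hx
  set P := deriv S x with hP
  set Q := S x with hQdef
  set R := deriv (deriv S) x with hR
  have hapos : 0 < x * (1 + c * x) * (1 + 2 * c * x) := by positivity
  have hDnn : 0 ≤ 1 + 8 * c * (x * (1 + c * x)) +
      16 * (n ^ 2 + c ^ 2) * (x * (1 + c * x)) ^ 2 := by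
    have := mul_pos hx h1cx
    nlinarith [sq_nonneg (x * (1 + c * x)), sq_nonneg n, sq_nonneg c]
  set s : ℝ := Real.sqrt (1 + 8 * c * (x * (1 + c * x)) +
      16 * (n ^ 2 + c ^ 2) * (x * (1 + c * x)) ^ 2) with hs
  have hsnn : 0 ≤ s := Real.sqrt_nonneg _
  have hssq : s ^ 2 = (4 * (n + c) * x * (1 + c * x) + 1) ^ 2 -
      4 * (x * (1 + c * x) * (1 + 2 * c * x)) * (2 * n * (1 + 2 * c * x)) := by
    rw [hs, Real.sq_sqrt hDnn]; ring
  clear_value s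
  -- quadratic inequality
  have hquad : (x * (1 + c * x) * (1 + 2 * c * x)) * P ^ 2 +
      (4 * (n + c) * x * (1 + c * x) + 1) * (P * Q) +
      (2 * n * (1 + 2 * c * x)) * Q ^ 2 ≤ 0 := by
    have h1 : (x * (1 + c * x) * (1 + 2 * c * x)) * P ^ 2 ≤
        (x * (1 + c * x) * (1 + 2 * c * x)) * (R * Q) :=
      mul_le_mul_of_nonneg_left hlc hapos.le
    have h3 : (x * (1 + c * x) * (1 + 2 * c * x)) * (R * Q) =
        (-((4 * (n + c) * x * (1 + c * x) + 1) * P) - (2 * n * (1 + 2 * c * x)) * Q) * Q := by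
      rw [← mul_assoc]
      have h2 : x * (1 + c * x) * (1 + 2 * c * x) * R =
          -((4 * (n + c) * x * (1 + c * x) + 1) * P) - (2 * n * (1 + 2 * c * x)) * Q := by
        linarith
      rw [h2]
    nlinarith [h1, h3]
  have hkey := quad_root_aux (x * (1 + c * x) * (1 + 2 * c * x))
      (4 * (n + c) * x * (1 + c * x) + 1) (2 * n * (1 + 2 * c * x)) P Q s
      hapos hQ hsnn hssq hquad
  rw [div_le_div_iff₀ hQ (by positivity)]
  nlinarith [hkey]
end

section
/- For n ∈ ℕ with n ≥ 1 and t ∈ [0,1], letting S_{n,-1}(t) = ∑_{k=0}^n (C(n,k) t^k (1-t)^{n-k})², one has S_{n,-1}(t) = (1/π) ∫_0^1 (x + (1-x)(1-2t)²)^n dx/√(x(1-x)). -/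
/-!
Substituting `x = (1 - cos u) / 2` turns the right-hand side into
`(1 / π) ∫₀^π ((1 - t)² + t² - 2 t (1 - t) cos u)ⁿ du`, and the integrand is
`|(1 - t - t e^{iu})ⁿ|² = |∑ₖ C(n,k) (1 - t)^(n-k) (-t)^k e^{iku}|²`.
Expanding the square gives a double sum of `cos ((k - j) u)`, whose integrals over `[0, π]`
vanish unless `k = j`; the diagonal terms are exactly the squared binomial probabilities.
-/

open Complex Finset ComplexConjugate

lemma normSq_add_mul_exp (a b u : ℝ) :
    normSq (a + b * exp (u * I)) = a ^ 2 + b ^ 2 + 2 * a * b * Real.cos u := by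
  rw [normSq_apply]
  simp only [add_re, add_im, ofReal_re, ofReal_im, mul_re, mul_im, exp_ofReal_mul_I_re,
    exp_ofReal_mul_I_im]
  linear_combination b ^ 2 * Real.sin_sq_add_cos_sq u

lemma add_mul_exp_pow (a b u : ℝ) (n : ℕ) :
    (a + b * exp (u * I)) ^ n =
      ∑ k ∈ range (n + 1), ((n.choose k * a ^ (n - k) * b ^ k : ℝ) : ℂ) * exp (k * u * I) := by
  rw [add_comm, add_pow]
  refine sum_congr rfl fun k _ => ?_
  rw [mul_pow, ← exp_nat_mul]
  push_cast
  ring_nf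

lemma normSq_sum_mul_exp (s : Finset ℕ) (c : ℕ → ℝ) (u : ℝ) :
    normSq (∑ k ∈ s, c k * exp (k * u * I)) =
      ∑ k ∈ s, ∑ j ∈ s, c k * c j * Real.cos ((k - j : ℝ) * u) := by
  have h := congrArg re (mul_conj (∑ k ∈ s, c k * exp (k * u * I)))
  rw [ofReal_re] at h
  rw [← h, map_sum, sum_mul_sum, re_sum]
  refine sum_congr rfl fun k _ => ?_
  rw [re_sum]
  refine sum_congr rfl fun j _ => ?_
  have hconj : conj (exp (j * u * I)) = exp (-(j * u * I)) := by rw [← exp_conj]; simp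
  calc (c k * exp (k * u * I) * conj (c j * exp (j * u * I))).re
      = (((c k * c j : ℝ) : ℂ) * exp (((k - j : ℝ) * u : ℝ) * I)).re := by
        rw [map_mul, conj_ofReal, hconj, mul_mul_mul_comm, ← exp_add]
        push_cast
        ring_nf
    _ = c k * c j * Real.cos ((k - j : ℝ) * u) := by rw [re_ofReal_mul, exp_ofReal_mul_I_re]

lemma integral_cos_natCast_sub_mul (k j : ℕ) :
    ∫ u in (0)..Real.pi, Real.cos ((k - j : ℝ) * u) = if k = j then Real.pi else 0 := by
  rcases eq_or_ne k j with rfl | h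
  · simp
  · have hkj : (k - j : ℝ) ≠ 0 := sub_ne_zero.mpr (Nat.cast_injective.ne h)
    rw [if_neg h, intervalIntegral.integral_comp_mul_left (fun u => Real.cos u) hkj,
      integral_cos, mul_zero, Real.sin_zero, sub_zero,
      show (k - j : ℝ) * Real.pi = ((k - j : ℤ) : ℝ) * Real.pi by push_cast; ring,
      Real.sin_int_mul_pi, smul_zero]

lemma integral_normSq_sum_mul_exp (s : Finset ℕ) (c : ℕ → ℝ) :
    ∫ u in (0)..Real.pi, normSq (∑ k ∈ s, c k * exp (k * u * I)) =
      Real.pi * ∑ k ∈ s, c k ^ 2 := by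
  have hcont (k j : ℕ) : Continuous fun u => c k * c j * Real.cos ((k - j : ℝ) * u) := by
    fun_prop
  simp_rw [normSq_sum_mul_exp]
  rw [intervalIntegral.integral_finsetSum fun k _ =>
    (continuous_finsetSum s fun j _ => hcont k j).intervalIntegrable _ _, mul_sum]
  refine sum_congr rfl fun k hk => ?_
  rw [intervalIntegral.integral_finsetSum fun j _ => (hcont k j).intervalIntegrable _ _]
  simp_rw [intervalIntegral.integral_const_mul, integral_cos_natCast_sub_mul, mul_ite, mul_zero]
  rw [sum_ite_eq s k, if_pos hk]
  ring

lemma integral_add_mul_cos_pow (a b : ℝ) (n : ℕ) :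
    ∫ u in (0)..Real.pi, (a ^ 2 + b ^ 2 + 2 * a * b * Real.cos u) ^ n =
      Real.pi * ∑ k ∈ range (n + 1), (n.choose k * a ^ (n - k) * b ^ k) ^ 2 := by
  simp_rw [← normSq_add_mul_exp, ← map_pow, add_mul_exp_pow]
  exact integral_normSq_sum_mul_exp _ _

lemma integral_div_sqrt_mul_one_sub (f : ℝ → ℝ) :
    ∫ x in (0:ℝ)..1, f x / Real.sqrt (x * (1 - x)) =
      ∫ u in (0)..Real.pi, f ((1 - Real.cos u) / 2) := by
  have himage : (fun u => (1 - Real.cos u) / 2) '' Set.Ioo 0 Real.pi = Set.Ioo 0 1 := by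
    ext x
    constructor
    · rintro ⟨u, ⟨hu0, huπ⟩, rfl⟩
      have hlt : Real.cos u < Real.cos 0 :=
        Real.strictAntiOn_cos ⟨le_rfl, Real.pi_pos.le⟩ ⟨hu0.le, huπ.le⟩ hu0
      have hgt : Real.cos Real.pi < Real.cos u :=
        Real.strictAntiOn_cos ⟨hu0.le, huπ.le⟩ ⟨Real.pi_pos.le, le_rfl⟩ huπ
      rw [Real.cos_zero] at hlt
      rw [Real.cos_pi] at hgt
      constructor <;> linarith
    · rintro ⟨hx0, hx1⟩
      refine ⟨Real.arccos (1 - 2 * x), ⟨Real.arccos_pos.2 (by linarith),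
        Real.arccos_lt_pi.2 (by linarith)⟩, ?_⟩
      dsimp only
      rw [Real.cos_arccos (by linarith) (by linarith)]
      ring
  have hderiv (u) (_ : u ∈ Set.Ioo 0 Real.pi) : HasDerivWithinAt (fun u => (1 - Real.cos u) / 2)
      (Real.sin u / 2) (Set.Ioo 0 Real.pi) u := by
    simpa using ((Real.hasDerivAt_cos u).const_sub 1).div_const 2 |>.hasDerivWithinAt
  have hinj : Set.InjOn (fun u => (1 - Real.cos u) / 2) (Set.Ioo 0 Real.pi) :=
    fun u hu v hv huv =>
      Real.injOn_cos (Set.Ioo_subset_Icc_self hu) (Set.Ioo_subset_Icc_self hv) (by simpa using huv)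
  rw [intervalIntegral.integral_of_le zero_le_one, intervalIntegral.integral_of_le Real.pi_pos.le,
    MeasureTheory.integral_Ioc_eq_integral_Ioo, MeasureTheory.integral_Ioc_eq_integral_Ioo,
    ← himage, MeasureTheory.integral_image_eq_integral_abs_deriv_smul measurableSet_Ioo hderiv hinj]
  refine MeasureTheory.setIntegral_congr_fun measurableSet_Ioo fun u hu => ?_
  have hsin : 0 < Real.sin u := Real.sin_pos_of_pos_of_lt_pi hu.1 hu.2
  have hsqrt : Real.sqrt ((1 - Real.cos u) / 2 * (1 - (1 - Real.cos u) / 2)) = Real.sin u / 2 := by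
    rw [Real.sqrt_eq_iff_mul_self_eq_of_pos (by positivity)]
    linear_combination (1 / 4 : ℝ) * Real.sin_sq_add_cos_sq u
  simp only [smul_eq_mul, hsqrt, abs_of_pos (half_pos hsin)]
  field_simp

theorem stmt_11_general (n : ℕ) (t : ℝ) :
    ∑ k ∈ Finset.range (n + 1), ((n.choose k : ℝ) * t ^ k * (1 - t) ^ (n - k)) ^ 2 =
      (1 / Real.pi) * ∫ x in (0:ℝ)..1,
        (x + (1 - x) * (1 - 2 * t) ^ 2) ^ n / Real.sqrt (x * (1 - x)) := by
  rw [integral_div_sqrt_mul_one_sub fun x => (x + (1 - x) * (1 - 2 * t) ^ 2) ^ n]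
  calc ∑ k ∈ range (n + 1), ((n.choose k : ℝ) * t ^ k * (1 - t) ^ (n - k)) ^ 2
      = (1 / Real.pi) * (Real.pi * ∑ k ∈ range (n + 1),
          (n.choose k * (1 - t) ^ (n - k) * (-t) ^ k) ^ 2) := by
        rw [one_div, inv_mul_cancel_left₀ Real.pi_ne_zero]
        refine sum_congr rfl fun k _ => ?_
        have h : ((-t) ^ k) ^ 2 = (t ^ k) ^ 2 := by rw [sq, sq, ← mul_pow, ← mul_pow, neg_mul_neg]
        linear_combination (-((n.choose k : ℝ) * (1 - t) ^ (n - k)) ^ 2) * h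
    _ = (1 / Real.pi) * ∫ u in (0)..Real.pi,
          ((1 - t) ^ 2 + (-t) ^ 2 + 2 * (1 - t) * (-t) * Real.cos u) ^ n := by
        rw [integral_add_mul_cos_pow]
    _ = _ := by
        congr 1
        refine intervalIntegral.integral_congr fun u _ => ?_
        ring

theorem stmt_11 (n : ℕ) (hn : 1 ≤ n) (t : ℝ) (ht : t ∈ Set.Icc (0:ℝ) 1) :
    ∑ k ∈ Finset.range (n + 1), ((n.choose k : ℝ) * t ^ k * (1 - t) ^ (n - k)) ^ 2 =
      (1 / Real.pi) * ∫ x in (0:ℝ)..1,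
        (x + (1 - x) * (1 - 2 * t) ^ 2) ^ n / Real.sqrt (x * (1 - x)) :=
  stmt_11_general n t
end

section
/- For n ∈ ℕ with n ≥ 1 and t ∈ [0,1] with t ≠ 0, 1, letting T = t(1-t) and S_{n,-1}(t) = ∑_{k=0}^n (C(n,k) t^k (1-t)^{n-k})², one has (1 − (1−4T)^{n+1})/(2π(n+1)T) ≤ S_{n,-1}(t). -/
open intervalIntegral Real Finset

lemma intA (m : ℤ) : ∫ θ in (0:ℝ)..(2*π), Complex.exp (m * θ * Complex.I)
    = if m = 0 then (2*π : ℂ) else 0 := by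
  split_ifs with h
  · simp [h]
  · have hc : (m : ℂ) * Complex.I ≠ 0 := by
      simp [Complex.ext_iff, h]
    have : ∀ θ : ℝ, Complex.exp (m * θ * Complex.I) = Complex.exp ((m * Complex.I) * θ) := by
      intro θ; ring_nf
    simp_rw [this]
    rw [integral_exp_mul_complex hc]
    have h2 : Complex.exp ((m : ℂ) * Complex.I * (2*π)) = 1 := by
      have := Complex.exp_int_mul_two_pi_mul_I m
      rw [← this]; ring_nf
    simp [h2]

lemma parseval (n : ℕ) (t : ℝ) :
    (∫ θ in (0:ℝ)..(2*π), (t^2+(1-t)^2 + 2*t*(1-t)*Real.cos θ)^n)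
      = 2*π * ∑ k ∈ Finset.range (n+1), ((n.choose k : ℝ) * t^k * (1-t)^(n-k))^2 := by
  set c : ℕ → ℝ := fun k => (n.choose k : ℝ) * t^k * (1-t)^(n-k) with hc
  set R := Finset.range (n+1) with hR
  set F : ℕ × ℕ → ℝ → ℂ := fun p θ =>
    ((c p.1 * c p.2 : ℝ) : ℂ) * Complex.exp (((p.1 - p.2 : ℤ) : ℂ) * θ * Complex.I) with hF
  have key : ∀ θ : ℝ, ((t^2+(1-t)^2 + 2*t*(1-t)*Real.cos θ : ℝ) : ℂ)^n
      = ∑ p ∈ R ×ˢ R, F p θ := by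
    intro θ
    rw [Finset.sum_product]
    have h1 : Complex.exp ((θ:ℂ)*Complex.I) = Complex.cos θ + Complex.sin θ * Complex.I :=
      Complex.exp_mul_I _
    have h2 : Complex.exp (-(θ:ℂ)*Complex.I) = Complex.cos θ - Complex.sin θ * Complex.I := by
      rw [Complex.exp_mul_I, Complex.cos_neg, Complex.sin_neg]; ring
    have h3 : Complex.sin θ^2 + Complex.cos θ^2 = 1 := Complex.sin_sq_add_cos_sq θ
    have hfac : ((t^2+(1-t)^2 + 2*t*(1-t)*Real.cos θ : ℝ) : ℂ)
        = ((t:ℂ)*Complex.exp ((θ:ℂ)*Complex.I)+(1-t))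
          * ((t:ℂ)*Complex.exp (-(θ:ℂ)*Complex.I)+(1-t)) := by
      rw [h1, h2]
      push_cast [Complex.ofReal_cos]
      linear_combination (-(t:ℂ)^2) * h3 + ((t:ℂ)^2 * Complex.sin θ^2) * Complex.I_sq
    rw [hfac, mul_pow, add_pow, add_pow, Finset.sum_mul_sum]
    refine Finset.sum_congr rfl fun k hk => Finset.sum_congr rfl fun j hj => ?_
    have hexp : Complex.exp (((k - j : ℤ) : ℂ) * θ * Complex.I)
        = Complex.exp ((k:ℕ) * ((θ:ℂ)*Complex.I)) * Complex.exp ((j:ℕ) * (-(θ:ℂ)*Complex.I)) := by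
      rw [← Complex.exp_add]; congr 1; push_cast; ring
    rw [mul_pow, mul_pow, ← Complex.exp_nat_mul, ← Complex.exp_nat_mul]
    simp only [hF, hc, hexp]
    push_cast
    ring
  have hint : ∀ (p : ℕ × ℕ), IntervalIntegrable (F p) MeasureTheory.volume 0 (2*π) := by
    intro p
    apply Continuous.intervalIntegrable
    simp only [hF]
    fun_prop
  have hC : (∫ θ in (0:ℝ)..(2*π), ((t^2+(1-t)^2 + 2*t*(1-t)*Real.cos θ : ℝ) : ℂ)^n)
      = ((2*π * ∑ k ∈ R, (c k)^2 : ℝ) : ℂ) := by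
    have step1 : (∫ θ in (0:ℝ)..(2*π), ((t^2+(1-t)^2 + 2*t*(1-t)*Real.cos θ : ℝ) : ℂ)^n)
        = ∫ θ in (0:ℝ)..(2*π), ∑ p ∈ R ×ˢ R, F p θ := by
      apply intervalIntegral.integral_congr
      intro θ _
      exact key θ
    have step2 : (∫ θ in (0:ℝ)..(2*π), ∑ p ∈ R ×ˢ R, F p θ)
        = ∑ p ∈ R ×ˢ R, ∫ θ in (0:ℝ)..(2*π), F p θ :=
      intervalIntegral.integral_finset_sum (fun p _ => hint p)
    have step3 : ∀ p : ℕ × ℕ, (∫ θ in (0:ℝ)..(2*π), F p θ)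
        = if p.2 = p.1 then ((2*π : ℝ):ℂ) * ((c p.1 : ℝ):ℂ)^2 else 0 := by
      intro p
      simp only [hF]
      rw [intervalIntegral.integral_const_mul, intA ((p.1 : ℤ) - (p.2 : ℤ))]
      by_cases hjk : p.2 = p.1
      · rw [if_pos (by omega), if_pos hjk, hjk]; push_cast; ring
      · rw [if_neg (by omega), if_neg hjk]; ring
    rw [step1, step2, Finset.sum_congr rfl (fun p _ => step3 p), Finset.sum_product]
    have step4 : ∀ k ∈ R, (∑ j ∈ R, if j = k then ((2*π : ℝ):ℂ) * ((c k : ℝ):ℂ)^2 else 0)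
        = ((2*π : ℝ):ℂ) * ((c k : ℝ):ℂ)^2 := by
      intro k hk
      rw [Finset.sum_ite_eq' R k, if_pos hk]
    rw [Finset.sum_congr rfl step4]
    push_cast
    rw [← Finset.mul_sum]
  have hre : (∫ θ in (0:ℝ)..(2*π), ((t^2+(1-t)^2 + 2*t*(1-t)*Real.cos θ : ℝ) : ℂ)^n)
      = ((∫ θ in (0:ℝ)..(2*π), (t^2+(1-t)^2 + 2*t*(1-t)*Real.cos θ)^n : ℝ) : ℂ) := by
    simp_rw [← Complex.ofReal_pow]
    exact intervalIntegral.integral_ofReal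
  rw [hre] at hC
  exact_mod_cast hC

theorem stmt_12 (n : ℕ) (hn : 1 ≤ n) (t : ℝ) (ht : t ∈ Set.Icc (0:ℝ) 1)
    (ht0 : t ≠ 0) (ht1 : t ≠ 1) :
    (1 - (1 - 4 * (t * (1 - t))) ^ (n + 1)) / (2 * Real.pi * (n + 1) * (t * (1 - t))) ≤
      ∑ k ∈ Finset.range (n + 1), ((n.choose k : ℝ) * t ^ k * (1 - t) ^ (n - k)) ^ 2 := by
  obtain ⟨h0, h1'⟩ := ht
  have ht0' : 0 < t := lt_of_le_of_ne h0 (Ne.symm ht0)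
  have ht1' : t < 1 := lt_of_le_of_ne h1' ht1
  have hT : 0 < t * (1 - t) := mul_pos ht0' (by linarith)
  set S := ∑ k ∈ Finset.range (n + 1), ((n.choose k : ℝ) * t ^ k * (1 - t) ^ (n - k)) ^ 2 with hS
  set G : ℝ → ℝ := fun u => (t^2+(1-t)^2 + 2*t*(1-t)*u)^n with hG
  have hGcont : Continuous G := by fun_prop
  have hGnonneg : ∀ θ : ℝ, 0 ≤ G (Real.cos θ) := by
    intro θ
    apply pow_nonneg
    nlinarith [Real.neg_one_le_cos θ, Real.cos_le_one θ, sq_nonneg (1-2*t)]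
  -- substitution integrals
  have hsub1 : (∫ θ in (0:ℝ)..π, (-Real.sin θ) • G (Real.cos θ))
      = ∫ u in (1:ℝ)..(-1), G u := by
    have := intervalIntegral.integral_comp_smul_deriv
      (f := Real.cos) (f' := fun x => -Real.sin x) (g := G) (a := 0) (b := π)
      (fun x _ => Real.hasDerivAt_cos x) (by fun_prop) hGcont
    simpa [Real.cos_pi] using this
  have hsub2 : (∫ θ in π..(2*π), (-Real.sin θ) • G (Real.cos θ))
      = ∫ u in (-1:ℝ)..1, G u := by
    have := intervalIntegral.integral_comp_smul_deriv
      (f := Real.cos) (f' := fun x => -Real.sin x) (g := G) (a := π) (b := 2*π)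
      (fun x _ => Real.hasDerivAt_cos x) (by fun_prop) hGcont
    simpa [Real.cos_pi, Real.cos_two_pi] using this
  have hI1 : (∫ θ in (0:ℝ)..π, Real.sin θ * G (Real.cos θ)) = ∫ u in (-1:ℝ)..1, G u := by
    have h := hsub1
    simp only [smul_eq_mul, neg_mul] at h
    rw [intervalIntegral.integral_neg, intervalIntegral.integral_symm (-1 : ℝ) 1] at h
    linarith [h]
  have hI2 : (∫ θ in π..(2*π), -Real.sin θ * G (Real.cos θ)) = ∫ u in (-1:ℝ)..1, G u := by
    simpa [smul_eq_mul] using hsub2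
  -- value of the u-integral
  have hval : (∫ u in (-1:ℝ)..1, G u)
      = (1 - (1 - 4*(t*(1-t)))^(n+1)) / (2*t*(1-t)*((n:ℝ)+1)) := by
    have hb : (2*t*(1-t)) ≠ 0 := ne_of_gt (by nlinarith)
    have h1 : ∀ u : ℝ, G u = (fun x => x^n) ((2*t*(1-t))*u + (t^2+(1-t)^2)) := by
      intro u; simp only [hG]; ring_nf
    simp_rw [h1]
    rw [intervalIntegral.integral_comp_mul_add (fun x => x^n) hb (t^2+(1-t)^2)]
    rw [integral_pow]
    have e1 : (2*t*(1-t)) * 1 + (t^2+(1-t)^2) = 1 := by ring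
    have e2 : (2*t*(1-t)) * (-1) + (t^2+(1-t)^2) = 1 - 4*(t*(1-t)) := by ring
    rw [e1, e2]
    rw [smul_eq_mul, one_pow]
    have hne : ((n:ℝ)+1) ≠ 0 := ne_of_gt (by positivity)
    field_simp
  -- monotonicity
  have hcont1 : Continuous fun θ => G (Real.cos θ) := by fun_prop
  have hmono1 : (∫ θ in (0:ℝ)..π, Real.sin θ * G (Real.cos θ))
      ≤ ∫ θ in (0:ℝ)..π, G (Real.cos θ) := by
    apply intervalIntegral.integral_mono_on Real.pi_pos.le
    · exact (Continuous.intervalIntegrable (by fun_prop) _ _)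
    · exact (Continuous.intervalIntegrable hcont1 _ _)
    · intro θ hθ
      exact mul_le_of_le_one_left (hGnonneg θ) (Real.sin_le_one θ)
  have hmono2 : (∫ θ in π..(2*π), -Real.sin θ * G (Real.cos θ))
      ≤ ∫ θ in π..(2*π), G (Real.cos θ) := by
    apply intervalIntegral.integral_mono_on (by linarith [Real.pi_pos])
    · exact (Continuous.intervalIntegrable (by fun_prop) _ _)
    · exact (Continuous.intervalIntegrable hcont1 _ _)
    · intro θ hθ
      have := Real.neg_one_le_sin θ
      nlinarith [hGnonneg θ]
  have hsplit : (∫ θ in (0:ℝ)..(2*π), G (Real.cos θ))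
      = (∫ θ in (0:ℝ)..π, G (Real.cos θ)) + ∫ θ in π..(2*π), G (Real.cos θ) := by
    rw [intervalIntegral.integral_add_adjacent_intervals
      (Continuous.intervalIntegrable hcont1 _ _) (Continuous.intervalIntegrable hcont1 _ _)]
  have hpar : (∫ θ in (0:ℝ)..(2*π), G (Real.cos θ)) = 2*π*S := parseval n t
  have hmain : (1 - (1 - 4*(t*(1-t)))^(n+1)) / ((t*(1-t))*(n+1)) ≤ 2*π*S := by
    have : 2 * ∫ u in (-1:ℝ)..1, G u ≤ 2*π*S := by
      rw [← hpar, hsplit]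
      linarith [hmono1, hmono2, hI1, hI2]
    rw [hval] at this
    calc (1 - (1 - 4*(t*(1-t)))^(n+1)) / ((t*(1-t))*(n+1))
        = 2 * ((1 - (1 - 4*(t*(1-t)))^(n+1)) / (2*t*(1-t)*((n:ℝ)+1))) := by
          have d1 : ((t*(1-t))*((n:ℝ)+1)) ≠ 0 := ne_of_gt (by positivity)
          have d2 : (2*t*(1-t)*((n:ℝ)+1)) ≠ 0 := ne_of_gt (by nlinarith)
          field_simp
      _ ≤ 2*π*S := this
  have hpos : (0:ℝ) < 2 * π * (n + 1) * (t * (1 - t)) := by positivity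
  rw [div_le_iff₀ hpos]
  have hpos2 : (0:ℝ) < (t*(1-t))*(n+1) := by positivity
  have := (div_le_iff₀ hpos2).mp hmain
  nlinarith [this]
end

section
/- For 0 ≤ k ≤ n natural numbers: ∑_{j=k}^n C(j,k) C(2j,j) C(2n−2j, n−j) = 4^{n−k} C(n,k) C(2k,k). -/
namespace Stmt14

open Finset

def u (n : ℕ) : ℕ := Nat.centralBinom n

def S (n k : ℕ) : ℕ := ∑ j ∈ range (n+1), j.choose k * u j * u (n - j)
def W (n k : ℕ) : ℕ := ∑ j ∈ range (n+1), j * (j.choose k * u j * u (n - j))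
def X (n k : ℕ) : ℕ := ∑ j ∈ range (n+1), (n - j) * (j.choose k * u j * u (n - j))

lemma hu (i : ℕ) : (i+1) * u (i+1) = (4*i+2) * u i := by
  have h := Nat.succ_mul_centralBinom_succ i
  have : (4*i+2) = 2 * (2*i+1) := by ring
  rw [this]
  simpa [u] using h

lemma lemWX (n k : ℕ) : W n k + X n k = n * S n k := by
  unfold W X S
  rw [← Finset.sum_add_distrib, Finset.mul_sum]
  refine Finset.sum_congr rfl fun j hj => ?_
  have hjn : j ≤ n := Finset.mem_range_succ_iff.mp hj
  rw [← add_mul]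
  congr 1
  omega

lemma lemW4 (n k : ℕ) : W n k = k * S n k + (k+1) * S n (k+1) := by
  unfold W S
  rw [Finset.mul_sum, Finset.mul_sum, ← Finset.sum_add_distrib]
  refine Finset.sum_congr rfl fun j hj => ?_
  rcases le_or_gt k j with h | h
  · have hc := Nat.choose_succ_right_eq j k
    calc j * (j.choose k * u j * u (n-j))
        = (k + (j-k)) * (j.choose k * u j * u (n-j)) := by rw [Nat.add_sub_cancel' h]
      _ = k * (j.choose k * u j * u (n-j)) + (j.choose k * (j-k)) * (u j * u (n-j)) := by ring
      _ = k * (j.choose k * u j * u (n-j)) + (j.choose (k+1) * (k+1)) * (u j * u (n-j)) := by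
          rw [hc]
      _ = k * (j.choose k * u j * u (n-j)) + (k+1) * (j.choose (k+1) * u j * u (n-j)) := by ring
  · have h2 : j < k + 1 := h.trans (Nat.lt_succ_self k)
    simp [Nat.choose_eq_zero_of_lt h, Nat.choose_eq_zero_of_lt h2]

lemma lemWsucc (n k : ℕ) :
    W (n+1) k = ∑ i ∈ range (n+1), (4*i+2) * ((i+1).choose k * u i * u (n-i)) := by
  unfold W
  rw [Finset.sum_range_succ']
  simp only [zero_mul, add_zero]
  refine Finset.sum_congr rfl fun i hi => ?_
  have h1 : n + 1 - (i + 1) = n - i := by omega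
  rw [h1]
  calc (i+1) * ((i+1).choose k * u (i+1) * u (n-i))
      = (i+1).choose k * ((i+1) * u (i+1)) * u (n-i) := by ring
    _ = (i+1).choose k * ((4*i+2) * u i) * u (n-i) := by rw [hu]
    _ = (4*i+2) * ((i+1).choose k * u i * u (n-i)) := by ring

lemma lemV (n k : ℕ) :
    ∑ j ∈ range (n+2), (n+1-j) * (j.choose k * u j * u (n+1-j)) = 4 * X n k + 2 * S n k := by
  rw [Finset.sum_range_succ]
  simp only [Nat.sub_self, zero_mul, add_zero]
  unfold X S
  rw [Finset.mul_sum, Finset.mul_sum, ← Finset.sum_add_distrib]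
  refine Finset.sum_congr rfl fun j hj => ?_
  have hjn : j ≤ n := Finset.mem_range_succ_iff.mp hj
  have h1 : n + 1 - j = (n - j) + 1 := by omega
  rw [h1]
  calc ((n-j)+1) * (j.choose k * u j * u ((n-j)+1))
      = j.choose k * u j * (((n-j)+1) * u ((n-j)+1)) := by ring
    _ = j.choose k * u j * ((4*(n-j)+2) * u (n-j)) := by rw [hu]
    _ = 4 * ((n-j) * (j.choose k * u j * u (n-j))) + 2 * (j.choose k * u j * u (n-j)) := by ring

lemma lemSplit (n k : ℕ) :
    (n+1) * S (n+1) k =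
      W (n+1) k + ∑ j ∈ range (n+2), (n+1-j) * (j.choose k * u j * u (n+1-j)) := by
  unfold S W
  rw [Finset.mul_sum, ← Finset.sum_add_distrib]
  refine Finset.sum_congr rfl fun j hj => ?_
  have hjn : j ≤ n + 1 := Finset.mem_range_succ_iff.mp hj
  rw [← add_mul]
  congr 1
  omega

lemma rec0 (n : ℕ) : (n+1) * S (n+1) 0 = (4*n+4) * S n 0 := by
  rw [lemSplit, lemV, lemWsucc]
  have hW : ∑ i ∈ range (n+1), (4*i+2) * ((i+1).choose 0 * u i * u (n-i))
      = 4 * W n 0 + 2 * S n 0 := by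
    unfold W S
    rw [Finset.mul_sum, Finset.mul_sum, ← Finset.sum_add_distrib]
    refine Finset.sum_congr rfl fun i hi => ?_
    simp only [Nat.choose_zero_right]
    ring
  rw [hW]
  have h := lemWX n 0
  calc 4 * W n 0 + 2 * S n 0 + (4 * X n 0 + 2 * S n 0)
      = 4 * (W n 0 + X n 0) + 4 * S n 0 := by ring
    _ = 4 * (n * S n 0) + 4 * S n 0 := by rw [h]
    _ = (4*n+4) * S n 0 := by ring

lemma recS (n l : ℕ) :
    (n+1) * S (n+1) (l+1) = (4*l+2) * S n l + (4*n+4*l+8) * S n (l+1) := by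
  rw [lemSplit, lemV, lemWsucc]
  have hW : ∑ i ∈ range (n+1), (4*i+2) * ((i+1).choose (l+1) * u i * u (n-i))
      = (4 * W n l + 2 * S n l) + (4 * W n (l+1) + 2 * S n (l+1)) := by
    unfold W S
    rw [Finset.mul_sum, Finset.mul_sum, Finset.mul_sum, Finset.mul_sum,
      ← Finset.sum_add_distrib, ← Finset.sum_add_distrib, ← Finset.sum_add_distrib]
    refine Finset.sum_congr rfl fun i hi => ?_
    rw [Nat.choose_succ_succ i l]
    ring
  rw [hW]
  have h1 := lemWX n (l+1)
  have h2 := lemW4 n l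
  zify at h1 h2 ⊢
  linear_combination 4 * h2 + 4 * h1

lemma S0 (n : ℕ) : S n 0 = 4 ^ n := by
  induction n with
  | zero => simp [S, u]
  | succ n ih =>
    have h := rec0 n
    rw [ih] at h
    have : (n+1) * S (n+1) 0 = (n+1) * 4 ^ (n+1) := by
      rw [h, pow_succ]; ring
    exact Nat.eq_of_mul_eq_mul_left (Nat.succ_pos n) this

lemma Sbase (l : ℕ) : S (l+1) (l+1) = u (l+1) := by
  unfold S
  rw [Finset.sum_eq_single_of_mem (l+1) (Finset.self_mem_range_succ (l+1))]
  · simp [u]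
  · intro j hj hne
    have hjl : j < l + 1 := by
      have := Finset.mem_range.mp hj; omega
    simp [Nat.choose_eq_zero_of_lt hjl]

lemma Sval : ∀ k n : ℕ, k ≤ n → S n k = 4 ^ (n - k) * n.choose k * u k := by
  intro k
  induction k with
  | zero =>
    intro n _
    simp [S0, u, Nat.centralBinom]
  | succ l ihl =>
    intro n hn
    induction n, hn using Nat.le_induction with
    | base => simp [Sbase, u]
    | succ n hn ihn =>
      have hl : l ≤ n := by omega
      have h := recS n l
      rw [ihl n hl, ihn] at h
      apply Nat.eq_of_mul_eq_mul_left (Nat.succ_pos n)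
      rw [h]
      obtain ⟨d, rfl⟩ : ∃ d, n = l + 1 + d := ⟨n - (l+1), by omega⟩
      have e1 : l + 1 + d - l = d + 1 := by omega
      have e2 : l + 1 + d - (l + 1) = d := by omega
      have e3 : l + 1 + d + 1 - (l + 1) = d + 1 := by omega
      rw [e1, e2, e3]
      have hB : (l+1+d).choose (l+1) * (l+1) = (l+1+d).choose l * (d+1) := by
        have := Nat.choose_succ_right_eq (l+1+d) l
        rwa [e1] at this
      have hul := hu l
      have hP : (l+1+d+1).choose (l+1) = (l+1+d).choose l + (l+1+d).choose (l+1) :=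
        Nat.choose_succ_succ (l+1+d) l
      rw [hP, pow_succ]
      zify at hB hul ⊢
      linear_combination (-(4 * (4:ℤ)^d * ((l+1+d).choose l : ℤ))) * hul
        + 4 * (4:ℤ)^d * (u (l+1) : ℤ) * hB

end Stmt14

theorem stmt_14 (n k : ℕ) (hkn : k ≤ n) :
    ∑ j ∈ Finset.Icc k n, j.choose k * (2 * j).choose j * (2 * n - 2 * j).choose (n - j) =
      4 ^ (n - k) * n.choose k * (2 * k).choose k := by
  have hterm : ∀ j, j.choose k * (2 * j).choose j * (2 * n - 2 * j).choose (n - j)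
      = j.choose k * Stmt14.u j * Stmt14.u (n - j) := by
    intro j
    have h2 : 2 * n - 2 * j = 2 * (n - j) := by omega
    rw [h2]
    rfl
  have h1 : ∑ j ∈ Finset.Icc k n, j.choose k * (2 * j).choose j * (2 * n - 2 * j).choose (n - j)
      = Stmt14.S n k := by
    simp only [hterm]
    unfold Stmt14.S
    apply Finset.sum_subset
    · intro x hx
      simp only [Finset.mem_Icc] at hx
      exact Finset.mem_range_succ_iff.mpr hx.2
    · intro x hx hnx
      have hxk : x < k := by
        have := Finset.mem_range_succ_iff.mp hx
        simp only [Finset.mem_Icc] at hnx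
        omega
      simp [Nat.choose_eq_zero_of_lt hxk]
  rw [h1, Stmt14.Sval k n hkn]
  rfl
end

section
/- For natural numbers 0 ≤ j ≤ n: ∑_{i=0}^{n−j} (−1/4)^i C(n−j, i) C(2i+2j, i+j) = 4^{j−n} C(2j,j) C(2n−2j, n−j) / C(n,j). -/
open Finset

private noncomputable def Saux (m j : ℕ) : ℚ :=
  ∑ i ∈ Finset.range (m + 1),
    (-(1/4) : ℚ) ^ i * ((m.choose i : ℚ)) * (((2 * i + 2 * j).choose (i + j) : ℚ))

private lemma Saux_rec (m j : ℕ) : Saux (m + 1) j = Saux m j - (1/4) * Saux m (j + 1) := by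
  unfold Saux
  rw [Finset.sum_range_succ' _ (m + 1)]
  have hsplit : ∀ i : ℕ,
      (-(1/4) : ℚ) ^ (i+1) * (((m+1).choose (i+1) : ℚ)) * (((2 * (i+1) + 2 * j).choose ((i+1) + j) : ℚ))
      = (-(1/4) : ℚ) ^ (i+1) * ((m.choose (i+1) : ℚ)) * (((2 * (i+1) + 2 * j).choose ((i+1) + j) : ℚ))
        + (-(1/4)) * ((-(1/4) : ℚ) ^ i * ((m.choose i : ℚ)) * (((2 * i + 2 * (j+1)).choose (i + (j+1)) : ℚ))) := by
    intro i
    have h1 : (m+1).choose (i+1) = m.choose i + m.choose (i+1) := Nat.choose_succ_succ m i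
    have h2 : 2 * (i+1) + 2 * j = 2 * i + 2 * (j+1) := by ring
    have h3 : (i+1) + j = i + (j+1) := by ring
    rw [h1, h2, h3]
    push_cast
    ring
  rw [Finset.sum_congr rfl (fun i _ => hsplit i), Finset.sum_add_distrib, ← Finset.mul_sum]
  have hB : ∑ i ∈ Finset.range (m + 1),
      (-(1/4) : ℚ) ^ (i+1) * ((m.choose (i+1) : ℚ)) * (((2 * (i+1) + 2 * j).choose ((i+1) + j) : ℚ))
      = ∑ i ∈ Finset.range m,
      (-(1/4) : ℚ) ^ (i+1) * ((m.choose (i+1) : ℚ)) * (((2 * (i+1) + 2 * j).choose ((i+1) + j) : ℚ)) := by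
    rw [Finset.sum_range_succ]
    simp [Nat.choose_succ_self]
  rw [hB,
    Finset.sum_range_succ' (fun i => (-(1/4) : ℚ) ^ i * ((m.choose i : ℚ)) * (((2 * i + 2 * j).choose (i + j) : ℚ))) m]
  simp only [Nat.choose_zero_right, Nat.cast_one]
  ring

private lemma choose_pos_q (a b : ℕ) (h : b ≤ a) : (0 : ℚ) < (a.choose b : ℚ) := by
  exact_mod_cast Nat.choose_pos h

private lemma Saux_closed (m : ℕ) : ∀ j : ℕ,
    Saux m j = ((2*j).choose j : ℚ) * ((2*m).choose m : ℚ) / (((m+j).choose j : ℚ) * 4 ^ m) := by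
  induction m with
  | zero =>
      intro j
      simp [Saux]
  | succ m ih =>
      intro j
      rw [Saux_rec, ih j, ih (j+1)]
      have hd : (0:ℚ) < ((m+j).choose j : ℚ) := choose_pos_q _ _ (by omega)
      have hd' : ((m+j).choose j : ℚ) ≠ 0 := ne_of_gt hd
      have hj1 : ((j:ℚ)+1) ≠ 0 := by positivity
      have hm1 : ((m:ℚ)+1) ≠ 0 := by positivity
      have hM : ((m:ℚ)+(j:ℚ)+1) ≠ 0 := by positivity
      -- binomial relations
      have rc : ((j:ℚ)+1) * ((2*(j+1)).choose (j+1) : ℚ) = 2*(2*(j:ℚ)+1) * ((2*j).choose j : ℚ) := by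
        have h := Nat.succ_mul_centralBinom_succ j
        simp only [Nat.centralBinom] at h
        have hq := congrArg (fun x : ℕ => (x:ℚ)) h
        push_cast [Nat.succ_eq_add_one] at hq
        linear_combination hq
      have re : ((j:ℚ)+1) * ((m+(j+1)).choose (j+1) : ℚ) = ((m:ℚ)+(j:ℚ)+1) * ((m+j).choose j : ℚ) := by
        have h := Nat.add_one_mul_choose_eq (m+j) j
        have h2 : m + (j+1) = (m+j) + 1 := by omega
        rw [h2]
        have hq := congrArg (fun x : ℕ => (x:ℚ)) h
        push_cast [Nat.succ_eq_add_one] at hq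
        linear_combination -hq
      have rf : ((m:ℚ)+1) * ((m+1+j).choose j : ℚ) = ((m:ℚ)+(j:ℚ)+1) * ((m+j).choose j : ℚ) := by
        have hs : (m+1+j).choose (m+1+j - j) = (m+1+j).choose j := Nat.choose_symm (by omega)
        have hsym : (m+1+j).choose j = (m+j+1).choose (m+1) := by
          rw [← hs]; congr 1 <;> omega
        have hs2 : (m+j).choose (m+j - j) = (m+j).choose j := Nat.choose_symm (by omega)
        have hsym2 : (m+j).choose m = (m+j).choose j := by
          rw [← hs2]; congr 1; omega
        have h := Nat.add_one_mul_choose_eq (m+j) m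
        rw [hsym2] at h
        rw [hsym]
        have hq := congrArg (fun x : ℕ => (x:ℚ)) h
        push_cast [Nat.succ_eq_add_one] at hq
        linear_combination -hq
      have rg : ((m:ℚ)+1) * ((2*(m+1)).choose (m+1) : ℚ) = 2*(2*(m:ℚ)+1) * ((2*m).choose m : ℚ) := by
        have h := Nat.succ_mul_centralBinom_succ m
        simp only [Nat.centralBinom] at h
        have hq := congrArg (fun x : ℕ => (x:ℚ)) h
        push_cast [Nat.succ_eq_add_one] at hq
        linear_combination hq
      -- solve the relations for the "new" binomials
      have hc2 : ((2*(j+1)).choose (j+1) : ℚ) = 2*(2*(j:ℚ)+1) * ((2*j).choose j : ℚ) / ((j:ℚ)+1) := by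
        field_simp; linarith [rc]
      have he2 : ((m+(j+1)).choose (j+1) : ℚ) = ((m:ℚ)+(j:ℚ)+1) * ((m+j).choose j : ℚ) / ((j:ℚ)+1) := by
        field_simp; linarith [re]
      have hf2 : ((m+1+j).choose j : ℚ) = ((m:ℚ)+(j:ℚ)+1) * ((m+j).choose j : ℚ) / ((m:ℚ)+1) := by
        field_simp; linarith [rf]
      have hg2 : ((2*(m+1)).choose (m+1) : ℚ) = 2*(2*(m:ℚ)+1) * ((2*m).choose m : ℚ) / ((m:ℚ)+1) := by
        field_simp; linarith [rg]
      rw [hc2, he2, hf2, hg2]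
      have h4 : ((4:ℚ))^m ≠ 0 := by positivity
      field_simp
      ring

theorem stmt_15 (n j : ℕ) (hjn : j ≤ n) :
    ∑ i ∈ Finset.range (n - j + 1),
        (-(1/4) : ℚ) ^ i * ((n - j).choose i : ℚ) * ((2 * i + 2 * j).choose (i + j) : ℚ) =
      (4 : ℚ) ^ ((j : ℤ) - (n : ℤ)) * ((2 * j).choose j : ℚ) *
        ((2 * n - 2 * j).choose (n - j) : ℚ) / (n.choose j : ℚ) := by
  obtain ⟨m, rfl⟩ : ∃ m, n = m + j := ⟨n - j, by omega⟩
  have h1 : m + j - j = m := by omega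
  have h2 : 2 * (m + j) - 2 * j = 2 * m := by omega
  have h3 : ((j:ℤ) - ((m+j:ℕ):ℤ)) = -(m:ℤ) := by push_cast; ring
  rw [h1, h2, h3]
  have hL : ∑ i ∈ Finset.range (m + 1),
      (-(1/4) : ℚ) ^ i * ((m).choose i : ℚ) * ((2 * i + 2 * j).choose (i + j) : ℚ) = Saux m j := rfl
  rw [hL, Saux_closed m j]
  have hd : ((m+j).choose j : ℚ) ≠ 0 := ne_of_gt (choose_pos_q _ _ (by omega))
  have h4 : ((4:ℚ))^m ≠ 0 := by positivity
  rw [zpow_neg, zpow_natCast]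
  rw [div_eq_div_iff (by positivity) hd]
  field_simp
end

section
/- Suppose for n ≥ 2 the Legendre polynomial P_n satisfies P_n(t) > 0 and P_n'(t)/P_n(t) ≤ 2n²/(t + (2n−1)√(t²−1)) for all t ≥ 1. Then P_n(t) ≤ (t+√(t²−1))^{n(2n−1)/(2(n−1))} · (t + (2n−1)√(t²−1))^{−n/(2(n−1))} for all t ≥ 1. -/
/-!
With `c = 2n - 1`, one has `c² - 1 = 4n(n - 1)`, and the function
`G(t) = c · arcosh t - log (t + c √(t² - 1))` has derivative `(c² - 1) / (t + c √(t² - 1))`.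
Hence the hypothesis says `(log P)' ≤ (n / (2(n - 1))) · G'` on `[1, ∞)`; since `log P` and `G`
both vanish at `1`, integrating gives `log P ≤ (n / (2(n - 1))) · G`, and exponentiating (with
`exp (arcosh t) = t + √(t² - 1)`) is the claim.
-/

open Real Set

lemma sub_le_sub_of_hasDerivAt_le {f g f' g' : ℝ → ℝ} {a b : ℝ} (hab : a ≤ b)
    (hf : ContinuousOn f (Icc a b)) (hg : ContinuousOn g (Icc a b))
    (hf' : ∀ x ∈ Ioo a b, HasDerivAt f (f' x) x)
    (hg' : ∀ x ∈ Ioo a b, HasDerivAt g (g' x) x)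
    (hle : ∀ x ∈ Ioo a b, f' x ≤ g' x) :
    f b - f a ≤ g b - g a := by
  have hmono : MonotoneOn (fun x => g x - f x) (Icc a b) := by
    refine monotoneOn_of_hasDerivWithinAt_nonneg (f' := fun x => g' x - f' x) (convex_Icc a b)
      (hg.sub hf) (fun x hx => ?_) (fun x hx => ?_)
    all_goals rw [interior_Icc] at hx
    · exact ((hg' x hx).sub (hf' x hx)).hasDerivWithinAt
    · exact sub_nonneg.2 (hle x hx)
  have := hmono (left_mem_Icc.2 hab) (right_mem_Icc.2 hab) hab
  simp only at this
  linarith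

lemma add_mul_sqrt_sq_sub_one_pos {c x : ℝ} (hc : 0 ≤ c) (hx : 1 ≤ x) :
    0 < x + c * √(x ^ 2 - 1) := by
  positivity

lemma continuousOn_log_add_mul_sqrt {c : ℝ} (hc : 0 ≤ c) :
    ContinuousOn (fun x => log (x + c * √(x ^ 2 - 1))) (Ici 1) :=
  ContinuousOn.log (by fun_prop) fun _ hx => (add_mul_sqrt_sq_sub_one_pos hc hx).ne'

lemma hasDerivAt_log_add_mul_sqrt {c x : ℝ} (hc : 0 ≤ c) (hx : 1 < x) :
    HasDerivAt (fun y => log (y + c * √(y ^ 2 - 1)))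
      ((c * x + √(x ^ 2 - 1)) / (√(x ^ 2 - 1) * (x + c * √(x ^ 2 - 1)))) x := by
  have hsq : 0 < x ^ 2 - 1 := by nlinarith
  have hsqrt : HasDerivAt (fun y => √(y ^ 2 - 1)) (x / √(x ^ 2 - 1)) x := by
    convert ((hasDerivAt_pow 2 x).sub_const 1).sqrt hsq.ne' using 1
    field_simp
    ring
  have hinner : HasDerivAt (fun y => y + c * √(y ^ 2 - 1)) (1 + c * (x / √(x ^ 2 - 1))) x :=
    (hasDerivAt_id' x).add (hsqrt.const_mul c)
  convert hinner.log (add_mul_sqrt_sq_sub_one_pos hc hx.le).ne' using 1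
  have : √(x ^ 2 - 1) ≠ 0 := (sqrt_pos.2 hsq).ne'
  field_simp
  ring

lemma hasDerivAt_mul_arcosh_sub_log {c x : ℝ} (hc : 0 ≤ c) (hx : 1 < x) :
    HasDerivAt (fun y => c * arcosh y - log (y + c * √(y ^ 2 - 1)))
      ((c ^ 2 - 1) / (x + c * √(x ^ 2 - 1))) x := by
  refine (((hasDerivAt_arcosh hx).const_mul c).sub
    (hasDerivAt_log_add_mul_sqrt hc hx)).congr_deriv ?_
  have hsq : 0 < x ^ 2 - 1 := by nlinarith
  have hpos := add_mul_sqrt_sq_sub_one_pos hc hx.le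
  have : √(x ^ 2 - 1) ≠ 0 := (sqrt_pos.2 hsq).ne'
  field_simp
  ring

theorem stmt_17 (n : ℕ) (hn : 2 ≤ n) (P : ℝ → ℝ)
    (hP1 : P 1 = 1)
    (hdiff : ∀ t, 1 ≤ t → DifferentiableAt ℝ P t)
    (hpos : ∀ t, 1 ≤ t → 0 < P t)
    (hbound : ∀ t, 1 ≤ t →
      deriv P t / P t ≤ 2 * n ^ 2 / (t + (2 * n - 1) * Real.sqrt (t ^ 2 - 1))) :
    ∀ t, 1 ≤ t →
      P t ≤ (t + Real.sqrt (t ^ 2 - 1)) ^ ((n : ℝ) * (2 * n - 1) / (2 * (n - 1))) *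
        (t + (2 * n - 1) * Real.sqrt (t ^ 2 - 1)) ^ (-(n : ℝ) / (2 * (n - 1))) := by
  intro t ht
  have hn' : (2 : ℝ) ≤ n := by exact_mod_cast hn
  set c : ℝ := 2 * n - 1
  have hc : 0 ≤ c := by linarith
  set k : ℝ := n / (2 * (n - 1))
  have hk : k * (c ^ 2 - 1) = 2 * n ^ 2 := by
    simp only [k, c]
    field_simp [show (n : ℝ) - 1 ≠ 0 by linarith]
    ring
  set G : ℝ → ℝ := fun y => c * arcosh y - log (y + c * √(y ^ 2 - 1))
  have hlog : log (P t) - log (P 1) ≤ k * G t - k * G 1 := by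
    refine sub_le_sub_of_hasDerivAt_le ht ?_ ?_
      (fun x hx => ((hdiff x hx.1.le).hasDerivAt).log (hpos x hx.1.le).ne')
      (fun x hx => (hasDerivAt_mul_arcosh_sub_log hc hx.1).const_mul k) (fun x hx => ?_)
    · exact ContinuousOn.log (fun x hx => (hdiff x hx.1).continuousAt.continuousWithinAt)
        fun x hx => (hpos x hx.1).ne'
    · exact continuousOn_const.mul (((continuousOn_const.mul continuousOn_arcosh).sub
        (continuousOn_log_add_mul_sqrt hc)).mono Icc_subset_Ici_self)
    · rw [mul_div_assoc', hk]
      exact hbound x hx.1.le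
  have hG1 : G 1 = 0 := by simp [G, arcosh_zero]
  rw [hP1, log_one, hG1, sub_zero, mul_zero, sub_zero] at hlog
  rw [rpow_def_of_pos (by positivity), rpow_def_of_pos (add_mul_sqrt_sq_sub_one_pos hc ht),
    ← exp_add, ← exp_log (hpos t ht)]
  refine exp_le_exp.2 (hlog.trans_eq ?_)
  simp only [G, k, c, arcosh]
  ring
end

section
/- Let n > 0 and suppose S : [0,∞) → (0,∞) is twice differentiable, convex (S'' ≥ 0), with S(0)=1, and satisfies x(1+cx)(1+2cx)S''(x) + (4(n+c)x(1+cx)+1)S'(x) + 2n(1+2cx)S(x) = 0 for x > 0, where c ≥ 0. Then S(x) ≤ (4(n+c)x(1+cx) + 1)^{−n/(2(n+c))} for all x ≥ 0. -/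
/-!
Writing `Q(x) = 4(n+c)x(1+cx) + 1` (`heunCoeff n c x`) for the coefficient of `S'` and
`p = n / (2(n+c))`, one has `p Q' = 2n(1+2cx)`, so dropping the nonnegative `S''` term of the equation leaves
`Q S' + p Q' S ≤ 0`. This says exactly that `S Q^p` is nonincreasing on `[0, ∞)`, and
`S(0) Q(0)^p = 1` gives `S ≤ Q^(-p)`.
-/

open Set

theorem HasDerivAt.mul_rpow_const {S Q : ℝ → ℝ} {S' Q' p y : ℝ} (hS : HasDerivAt S S' y)
    (hQ : HasDerivAt Q Q' y) (hQy : 0 < Q y) :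
    HasDerivAt (fun x => S x * Q x ^ p) (Q y ^ (p - 1) * (Q y * S' + p * Q' * S y)) y := by
  refine (hS.mul (hQ.rpow_const (p := p) (Or.inl hQy.ne'))).congr_deriv ?_
  rw [show Q y ^ p = Q y ^ (p - 1) * Q y by
    rw [← Real.rpow_add_one hQy.ne']; ring_nf]
  ring

theorem antitoneOn_mul_rpow_of_le_zero {S Q : ℝ → ℝ} {p a b : ℝ}
    (hS : ∀ y ∈ Icc a b, DifferentiableAt ℝ S y) (hQ : ∀ y ∈ Icc a b, DifferentiableAt ℝ Q y)
    (hQpos : ∀ y ∈ Icc a b, 0 < Q y)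
    (hineq : ∀ y ∈ Ioo a b, Q y * deriv S y + p * deriv Q y * S y ≤ 0) :
    AntitoneOn (fun x => S x * Q x ^ p) (Icc a b) := by
  have hG : ∀ y ∈ Icc a b, HasDerivAt (fun x => S x * Q x ^ p)
      (Q y ^ (p - 1) * (Q y * deriv S y + p * deriv Q y * S y)) y := fun y hy =>
    (hS y hy).hasDerivAt.mul_rpow_const (hQ y hy).hasDerivAt (hQpos y hy)
  apply antitoneOn_of_deriv_nonpos (convex_Icc a b)
  · exact fun y hy => (hG y hy).continuousAt.continuousWithinAt
  · rw [interior_Icc]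
    exact fun y hy => (hG y (Ioo_subset_Icc_self hy)).differentiableAt.differentiableWithinAt
  · rw [interior_Icc]
    intro y hy
    rw [(hG y (Ioo_subset_Icc_self hy)).deriv]
    exact mul_nonpos_of_nonneg_of_nonpos
      (Real.rpow_pos_of_pos (hQpos y (Ioo_subset_Icc_self hy)) _).le (hineq y hy)

def heunCoeff (n c x : ℝ) : ℝ := 4 * (n + c) * x * (1 + c * x) + 1

theorem hasDerivAt_heunCoeff (n c x : ℝ) :
    HasDerivAt (heunCoeff n c) (4 * (n + c) * (1 + 2 * c * x)) x := by
  have h := ((((hasDerivAt_id' x).const_mul (4 * (n + c))).mul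
    (((hasDerivAt_id' x).const_mul c).const_add 1)).add_const 1)
  exact h.congr_deriv (by ring)

theorem heunCoeff_pos {n c x : ℝ} (hnc : 0 ≤ n + c) (hc : 0 ≤ c) (hx : 0 ≤ x) :
    0 < heunCoeff n c x := by
  unfold heunCoeff
  have : 0 ≤ 4 * (n + c) * x * (1 + c * x) := by positivity
  linarith

theorem heunCoeff_mul_add_le_zero {n c y s s' s'' : ℝ} (hc : 0 ≤ c) (hy : 0 ≤ y) (hs'' : 0 ≤ s'')
    (hode : y * (1 + c * y) * (1 + 2 * c * y) * s'' + heunCoeff n c y * s' +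
      2 * n * (1 + 2 * c * y) * s = 0) :
    heunCoeff n c y * s' + 2 * n * (1 + 2 * c * y) * s ≤ 0 := by
  have : 0 ≤ y * (1 + c * y) * (1 + 2 * c * y) * s'' := by positivity
  linarith

theorem stmt_18_general (n c : ℝ) (hn : 0 < n) (hc : 0 ≤ c) (S : ℝ → ℝ)
    (hS0 : S 0 = 1)
    (hdiff : ∀ x, 0 ≤ x → DifferentiableAt ℝ S x ∧ DifferentiableAt ℝ (deriv S) x)
    (hconv : ∀ x, 0 ≤ x → 0 ≤ deriv (deriv S) x)
    (hode : ∀ x, 0 < x →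
      x * (1 + c * x) * (1 + 2 * c * x) * deriv (deriv S) x +
        (4 * (n + c) * x * (1 + c * x) + 1) * deriv S x +
        2 * n * (1 + 2 * c * x) * S x = 0) :
    ∀ x, 0 ≤ x →
      S x ≤ (4 * (n + c) * x * (1 + c * x) + 1) ^ (-(n / (2 * (n + c)))) := by
  intro x hx
  have hnc : 0 < n + c := by linarith
  set p := n / (2 * (n + c))
  have hQpos : ∀ y ∈ Icc 0 x, 0 < heunCoeff n c y := fun y hy => heunCoeff_pos hnc.le hc hy.1
  have hanti : AntitoneOn (fun y => S y * heunCoeff n c y ^ p) (Icc 0 x) := by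
    refine antitoneOn_mul_rpow_of_le_zero (fun y hy => (hdiff y hy.1).1)
      (fun y _ => (hasDerivAt_heunCoeff n c y).differentiableAt) hQpos fun y hy => ?_
    rw [(hasDerivAt_heunCoeff n c y).deriv,
      show p * (4 * (n + c) * (1 + 2 * c * y)) = 2 * n * (1 + 2 * c * y) by
        simp only [p]; field_simp; ring]
    exact heunCoeff_mul_add_le_zero hc hy.1.le (hconv y hy.1.le) (hode y hy.1)
  have hbound : S x * heunCoeff n c x ^ p ≤ 1 := by
    simpa [heunCoeff, hS0] using hanti (left_mem_Icc.2 hx) (right_mem_Icc.2 hx) hx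
  have hQx := hQpos x (right_mem_Icc.2 hx)
  change S x ≤ heunCoeff n c x ^ (-p)
  rw [Real.rpow_neg hQx.le, ← one_div, le_div_iff₀ (Real.rpow_pos_of_pos hQx p)]
  exact hbound

theorem stmt_18 (n c : ℝ) (hn : 0 < n) (hc : 0 ≤ c) (S : ℝ → ℝ)
    (hpos : ∀ x, 0 ≤ x → 0 < S x)
    (hS0 : S 0 = 1)
    (hdiff : ∀ x, 0 ≤ x → DifferentiableAt ℝ S x ∧ DifferentiableAt ℝ (deriv S) x)
    (hconv : ∀ x, 0 ≤ x → 0 ≤ deriv (deriv S) x)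
    (hode : ∀ x, 0 < x →
      x * (1 + c * x) * (1 + 2 * c * x) * deriv (deriv S) x +
        (4 * (n + c) * x * (1 + c * x) + 1) * deriv S x +
        2 * n * (1 + 2 * c * x) * S x = 0) :
    ∀ x, 0 ≤ x →
      S x ≤ (4 * (n + c) * x * (1 + c * x) + 1) ^ (-(n / (2 * (n + c)))) :=
  stmt_18_general n c hn hc S hS0 hdiff hconv hode
end
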